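/- arXiv:1609.05832 — 6 statements merged into one kernel-verified Lean document; each statement's English description precedes it below -/
import Mathlib

section
/- Suppose σ₁₂² ≥ 0. Then P_super ≤ σ₁₂, i.e., for every ε>0 there exists a superreplicating portfolio whose price E¹[u₁(S₁)]+E²[u₂(S₂)] is at most σ₁₂+ε. (For σ₁₂>0 the portfolio u₁(s₁)=σ₁₂/2 − L(s₁)/(2σ₁₂), u₂(s₂)=L(s₂)/(2σ₁₂), Δ^S≡0, Δ^L≡−1/(2σ₁₂) is superreplicating with price exactly σ₁₂.) -/
open MeasureTheory Set Filter

noncomputable section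

/-- The log-contract payoff `L(x) = -(2/τ) ln x`. -/
def Lf (τ x : ℝ) : ℝ := -(2 / τ) * Real.log x

/-- `μ` is a market smile: a probability measure concentrated on `(0,∞)`
with mean `S₀` and integrable logarithm. -/
structure IsMarginal (S₀ : ℝ) (μ : Measure ℝ) : Prop where
  prob : IsProbabilityMeasure μ
  conc : μ (Set.Ioi (0 : ℝ))ᶜ = 0
  int_id : Integrable (fun s => s) μ
  mean : (∫ s, s ∂μ) = S₀
  int_log : Integrable (fun s => |Real.log s|) μ

/-- A superreplicating portfolio for the VIX future. -/
structure IsSuperRep (τ : ℝ) (μ₁ μ₂ : Measure ℝ) (u₁ u₂ : ℝ → ℝ)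
    (ΔS ΔL : ℝ → ℝ → ℝ) : Prop where
  meas_u₁ : Measurable u₁
  meas_u₂ : Measurable u₂
  meas_ΔS : Measurable (Function.uncurry ΔS)
  meas_ΔL : Measurable (Function.uncurry ΔL)
  int_u₁ : Integrable u₁ μ₁
  int_u₂ : Integrable u₂ μ₂
  hedge : ∀ s₁ s₂ v : ℝ, 0 < s₁ → 0 < s₂ → 0 ≤ v →
    v ≤ u₁ s₁ + u₂ s₂ + ΔS s₁ v * (s₂ - s₁) + ΔL s₁ v * (Lf τ (s₂ / s₁) - v ^ 2)

lemma intLf {S₀ τ : ℝ} {μ : Measure ℝ} (h : IsMarginal S₀ μ) : Integrable (Lf τ) μ := by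
  have habs : Integrable (fun s => ‖Real.log s‖) μ := by
    simpa [Real.norm_eq_abs] using h.int_log
  have hlog : Integrable Real.log μ :=
    (integrable_norm_iff Real.measurable_log.aestronglyMeasurable).mp habs
  exact (hlog.const_mul (-(2/τ))).congr (Filter.Eventually.of_forall fun x => by simp [Lf])

lemma key_superrep {S₀ τ : ℝ} (hτ : 0 < τ) {μ₁ μ₂ : Measure ℝ}
    (h₁ : IsMarginal S₀ μ₁) (h₂ : IsMarginal S₀ μ₂) {c : ℝ} (hc : 0 < c) :
    IsSuperRep τ μ₁ μ₂ (fun s₁ => c / 2 - Lf τ s₁ / (2 * c))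
      (fun s₂ => Lf τ s₂ / (2 * c)) (fun _ _ => 0) (fun _ _ => -(1 / (2 * c))) := by
  have hmeasLf : Measurable (Lf τ) := Real.measurable_log.const_mul _
  refine ⟨?_, ?_, ?_, ?_, ?_, ?_, ?_⟩
  · exact (measurable_const.sub (hmeasLf.div_const _))
  · exact hmeasLf.div_const _
  · exact measurable_const
  · exact measurable_const
  · haveI := h₁.prob
    exact (integrable_const _).sub ((intLf h₁).div_const _)
  · exact (intLf h₂).div_const _
  · intro s₁ s₂ v hs₁ hs₂ hv
    have hL : Lf τ (s₂ / s₁) = Lf τ s₂ - Lf τ s₁ := by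
      simp [Lf, Real.log_div hs₂.ne' hs₁.ne']; ring
    rw [hL]
    have h1 : (c / 2 - Lf τ s₁ / (2 * c)) + Lf τ s₂ / (2 * c) + 0 * (s₂ - s₁) +
        (-(1 / (2 * c))) * ((Lf τ s₂ - Lf τ s₁) - v ^ 2) = c / 2 + v ^ 2 / (2 * c) := by
      field_simp; ring
    rw [h1, ← sub_nonneg]
    have h2 : c / 2 + v ^ 2 / (2 * c) - v = (v - c) ^ 2 / (2 * c) := by
      field_simp; ring
    rw [h2]; positivity

lemma key_price {S₀ τ : ℝ} (hτ : 0 < τ) {μ₁ μ₂ : Measure ℝ}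
    (h₁ : IsMarginal S₀ μ₁) (h₂ : IsMarginal S₀ μ₂) {c : ℝ} (hc : 0 < c) :
    (∫ s, c / 2 - Lf τ s / (2 * c) ∂μ₁) + (∫ s, Lf τ s / (2 * c) ∂μ₂)
      = c / 2 + ((∫ s, Lf τ s ∂μ₂) - ∫ s, Lf τ s ∂μ₁) / (2 * c) := by
  haveI := h₁.prob
  rw [integral_sub (integrable_const _) ((intLf h₁).div_const _),
    integral_const, integral_div, integral_div]
  simp [measure_univ]
  ring

/-- The classical upper bound: `P_super ≤ σ₁₂`.  For every `ε > 0` there is a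
superreplicating portfolio whose price is at most `σ₁₂ + ε`; moreover, when
`σ₁₂ > 0` the explicit classical portfolio is superreplicating with price
exactly `σ₁₂`. -/
theorem classical_upper_bound (τ S₀ : ℝ) (hτ : 0 < τ) (hS₀ : 0 < S₀)
    (μ₁ μ₂ : Measure ℝ) (h₁ : IsMarginal S₀ μ₁) (h₂ : IsMarginal S₀ μ₂)
    (σsq σ : ℝ) (hσsq : σsq = (∫ s, Lf τ s ∂μ₂) - ∫ s, Lf τ s ∂μ₁)
    (hσsq_nonneg : 0 ≤ σsq) (hσ : σ = Real.sqrt σsq) :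
    (∀ ε : ℝ, 0 < ε → ∃ u₁ u₂ ΔS ΔL, IsSuperRep τ μ₁ μ₂ u₁ u₂ ΔS ΔL ∧
      (∫ s, u₁ s ∂μ₁) + (∫ s, u₂ s ∂μ₂) ≤ σ + ε) ∧
    (0 < σsq →
      IsSuperRep τ μ₁ μ₂
        (fun s₁ => σ / 2 - Lf τ s₁ / (2 * σ))
        (fun s₂ => Lf τ s₂ / (2 * σ))
        (fun _ _ => 0)
        (fun _ _ => -(1 / (2 * σ))) ∧
      (∫ s, σ / 2 - Lf τ s / (2 * σ) ∂μ₁) + (∫ s, Lf τ s / (2 * σ) ∂μ₂) = σ) := by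
  have hσ_nonneg : 0 ≤ σ := hσ ▸ Real.sqrt_nonneg _
  have hσsq_eq : σ ^ 2 = σsq := by rw [hσ, Real.sq_sqrt hσsq_nonneg]
  constructor
  · intro ε hε
    set c := σ + ε with hcdef
    have hc : 0 < c := by positivity
    refine ⟨_, _, _, _, key_superrep hτ h₁ h₂ hc, ?_⟩
    rw [key_price hτ h₁ h₂ hc, ← hσsq]
    have hσle : σ ≤ c := by simp [hcdef]; linarith
    have : σsq ≤ c ^ 2 := by nlinarith
    have h2 : σsq / (2 * c) ≤ c / 2 := by
      rw [div_le_div_iff₀ (by positivity) (by norm_num)]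
      nlinarith
    linarith
  · intro hpos
    have hσpos : 0 < σ := by
      rw [hσ]; exact Real.sqrt_pos.mpr hpos
    refine ⟨key_superrep hτ h₁ h₂ hσpos, ?_⟩
    rw [key_price hτ h₁ h₂ hσpos, ← hσsq, ← hσsq_eq]
    field_simp
    ring
end
end

section
/- (i) If μ ∈ M_V(μ₁,μ₂), then the projection μ₍₁,₂₎ of μ onto the first two coordinates belongs to M(μ₁,μ₂). (ii) If μ ∈ M(μ₁,μ₂), then Λ_μ(S₁) ≥ 0 μ-a.s. and the law μ_Λ of (S₁,S₂,√(Λ_μ(S₁))) under μ belongs to M_V(μ₁,μ₂). -/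
/-!
Part (i) only transports marginals and test functions along the projection. For (ii),
disintegrate `μ = μ₁ ⊗ κ` along `S₁` and take `Λ_μ(x) = ∫ L(y/x) dκ_x(y)`; two versions of
`Λ_μ` agree `μ`-a.s., since testing against the sign of their difference gives
`∫ |Λ - Λ'| = 0`. The martingale condition says that `κ_x` has mean `x`, so integrating the
tangent-line bound `L(t) ≥ -(2/τ)(t - 1)` against `κ_x` gives `Λ_μ(x) ≥ 0`. Finally
`V = √Λ_μ(S₁)` is a function of `S₁` with `V² = Λ_μ(S₁)`, so the two defining identities of
`M_V` reduce to the martingale property of `μ` and to the definition of `Λ_μ`.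
-/

open MeasureTheory Set Filter

noncomputable section

/-- `μ ∈ M(μ₁,μ₂)`: a martingale coupling of `μ₁` and `μ₂`. -/
structure MemM (μ₁ μ₂ : Measure ℝ) (μ : Measure (ℝ × ℝ)) : Prop where
  prob : IsProbabilityMeasure μ
  fst : μ.map Prod.fst = μ₁
  snd : μ.map Prod.snd = μ₂
  mart : ∀ h : ℝ → ℝ, Measurable h → (∀ x, |h x| ≤ 1) →
    ∫ p : ℝ × ℝ, h p.1 * (p.2 - p.1) ∂μ = 0

/-- `μ ∈ M_V(μ₁,μ₂)`: a joint model for `(S₁,S₂,V)` consistent with the smiles. -/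
structure MemMV (τ : ℝ) (μ₁ μ₂ : Measure ℝ) (μ : Measure (ℝ × ℝ × ℝ)) : Prop where
  prob : IsProbabilityMeasure μ
  fst : μ.map (fun p => p.1) = μ₁
  snd : μ.map (fun p => p.2.1) = μ₂
  vnonneg : μ {p : ℝ × ℝ × ℝ | p.2.2 < 0} = 0
  int_v2 : Integrable (fun p : ℝ × ℝ × ℝ => p.2.2 ^ 2) μ
  mart : ∀ h : ℝ → ℝ → ℝ, Measurable (Function.uncurry h) → (∀ x v, |h x v| ≤ 1) →
    ∫ p : ℝ × ℝ × ℝ, h p.1 p.2.2 * (p.2.1 - p.1) ∂μ = 0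
  vix : ∀ h : ℝ → ℝ → ℝ, Measurable (Function.uncurry h) → (∀ x v, |h x v| ≤ 1) →
    ∫ p : ℝ × ℝ × ℝ, h p.1 p.2.2 * (Lf τ (p.2.1 / p.1) - p.2.2 ^ 2) ∂μ = 0

/-- `Λ` is (a version of) `Λ_μ`, i.e. `Λ(S₁) = E^μ[L(S₂/S₁) | S₁]`, expressed
through bounded measurable test functions of `S₁`. -/
def IsCondLambda (τ : ℝ) (μ : Measure (ℝ × ℝ)) (Λ : ℝ → ℝ) : Prop :=
  Measurable Λ ∧ Integrable (fun p : ℝ × ℝ => Λ p.1) μ ∧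
    ∀ h : ℝ → ℝ, Measurable h → (∀ x, |h x| ≤ 1) →
      ∫ p : ℝ × ℝ, h p.1 * Lf τ (p.2 / p.1) ∂μ = ∫ p : ℝ × ℝ, h p.1 * Λ p.1 ∂μ

section TestFunctions

variable {α β : Type*} [MeasurableSpace α] [MeasurableSpace β] {μ : Measure β}

lemma MeasureTheory.Integrable.mul_of_abs_le_one {g h : β → ℝ} (hg : Integrable g μ)
    (hh : Measurable h) (hb : ∀ x, |h x| ≤ 1) : Integrable (fun x => h x * g x) μ :=
  hg.bdd_mul hh.aestronglyMeasurable
    (Eventually.of_forall fun x => (Real.norm_eq_abs _).le.trans (hb x))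

lemma ae_eq_zero_of_forall_integral_comp_mul_eq_zero {f : β → α} {d : α → ℝ}
    (hd : Measurable d) (hdi : Integrable (fun x => d (f x)) μ)
    (H : ∀ h : α → ℝ, Measurable h → (∀ a, |h a| ≤ 1) → ∫ x, h (f x) * d (f x) ∂μ = 0) :
    ∀ᵐ x ∂μ, d (f x) = 0 := by
  set s : α → ℝ := fun a => if 0 ≤ d a then 1 else -1
  have hs : Measurable s :=
    Measurable.ite (measurableSet_le measurable_const hd) measurable_const measurable_const
  have hs_abs : ∀ a, s a * d a = |d a| := by
    intro a
    rcases le_or_gt 0 (d a) with h | h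
    · simp [s, h, abs_of_nonneg h]
    · simp [s, not_le.2 h, abs_of_neg h]
  have hint : ∫ x, |d (f x)| ∂μ = 0 := by
    simpa only [hs_abs] using H s hs fun a => by by_cases h : 0 ≤ d a <;> simp [s, h]
  filter_upwards [(integral_eq_zero_iff_of_nonneg (fun x => abs_nonneg _) hdi.abs).1 hint]
    with x hx using abs_eq_zero.1 hx

lemma ae_eq_comp_of_forall_integral_comp_mul_eq {f : β → α} (hf : Measurable f)
    {g g' : α → ℝ} (hg : Measurable g) (hg' : Measurable g')
    (hgi : Integrable (fun x => g (f x)) μ) (hgi' : Integrable (fun x => g' (f x)) μ)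
    (H : ∀ h : α → ℝ, Measurable h → (∀ a, |h a| ≤ 1) →
      ∫ x, h (f x) * g (f x) ∂μ = ∫ x, h (f x) * g' (f x) ∂μ) :
    ∀ᵐ x ∂μ, g (f x) = g' (f x) := by
  refine (ae_eq_zero_of_forall_integral_comp_mul_eq_zero (hg.sub hg') (hgi.sub hgi')
    fun h hh hb => ?_).mono fun x hx => sub_eq_zero.1 hx
  have hhf : Measurable fun x => h (f x) := hh.comp hf
  simp only [Pi.sub_apply, mul_sub]
  rw [integral_sub (hgi.mul_of_abs_le_one hhf fun x => hb (f x))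
    (hgi'.mul_of_abs_le_one hhf fun x => hb (f x)), H h hh hb, sub_self]

end TestFunctions

lemma integral_fst_mul_eq_integral_condKernel {α Ω : Type*} [MeasurableSpace α]
    [MeasurableSpace Ω] [StandardBorelSpace Ω] [Nonempty Ω] {ρ : Measure (α × Ω)}
    [IsFiniteMeasure ρ] {G : α × Ω → ℝ} (hG : Integrable G ρ) {h : α → ℝ} (hh : Measurable h)
    (hb : ∀ x, |h x| ≤ 1) :
    ∫ p, h p.1 * G p ∂ρ = ∫ x, h x * ∫ y, G (x, y) ∂ρ.condKernel x ∂ρ.fst := by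
  have hhf : Measurable fun p : α × Ω => h p.1 := hh.comp measurable_fst
  rw [← Measure.integral_condKernel (hG.mul_of_abs_le_one hhf fun p => hb p.1)]
  simp only [integral_const_mul]

lemma neg_two_div_mul_sub_one_le_Lf {τ t : ℝ} (hτ : 0 < τ) (ht : 0 < t) :
    -(2 / τ) * (t - 1) ≤ Lf τ t := by
  have := Real.log_le_sub_one_of_pos ht
  unfold Lf
  nlinarith [div_pos two_pos hτ]

lemma integral_Lf_div_nonneg {ν : Measure ℝ} [IsProbabilityMeasure ν] {τ x : ℝ} (hτ : 0 < τ)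
    (hx : 0 < x) (hpos : ∀ᵐ y ∂ν, 0 < y) (hint : Integrable (fun y => y) ν)
    (hmean : ∫ y, y ∂ν = x) (hL : Integrable (fun y => Lf τ (y / x)) ν) :
    0 ≤ ∫ y, Lf τ (y / x) ∂ν := by
  have hlin : Integrable (fun y => y / x - 1) ν := (hint.div_const x).sub (integrable_const 1)
  calc (0 : ℝ) = ∫ y, -(2 / τ) * (y / x - 1) ∂ν := by
        rw [integral_const_mul, integral_sub (hint.div_const x) (integrable_const 1),
          integral_div, hmean, div_self hx.ne']
        simp
    _ ≤ ∫ y, Lf τ (y / x) ∂ν :=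
        integral_mono_ae (hlin.const_mul _) hL <| hpos.mono fun y hy =>
          neg_two_div_mul_sub_one_le_Lf hτ (div_pos hy hx)

lemma IsMarginal.ae_pos {m : ℝ} {ν : Measure ℝ} (h : IsMarginal m ν) : ∀ᵐ x ∂ν, 0 < x :=
  mem_ae_iff.2 h.conc

lemma IsMarginal.integrable_log {m : ℝ} {ν : Measure ℝ} (h : IsMarginal m ν) :
    Integrable Real.log ν :=
  (integrable_norm_iff Real.measurable_log.aestronglyMeasurable).1 h.int_log

lemma MemMV.memM_map {τ : ℝ} {μ₁ μ₂ : Measure ℝ} {μ : Measure (ℝ × ℝ × ℝ)}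
    (hμ : MemMV τ μ₁ μ₂ μ) : MemM μ₁ μ₂ (μ.map fun p => (p.1, p.2.1)) := by
  have := hμ.prob
  have hF : Measurable fun p : ℝ × ℝ × ℝ => (p.1, p.2.1) :=
    measurable_fst.prodMk (measurable_fst.comp measurable_snd)
  refine ⟨Measure.isProbabilityMeasure_map hF.aemeasurable, ?_, ?_, fun h hh hb => ?_⟩
  · rw [Measure.map_map measurable_fst hF]; exact hμ.fst
  · rw [Measure.map_map measurable_snd hF]; exact hμ.snd
  · rw [integral_map (f := fun p : ℝ × ℝ => h p.1 * (p.2 - p.1)) hF.aemeasurable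
      ((hh.comp measurable_fst).mul (measurable_snd.sub measurable_fst)).aestronglyMeasurable]
    exact hμ.mart (fun x _ => h x) (hh.comp measurable_fst) fun x _ => hb x

/-- The paper's `Λ_μ(x) = E^μ[L(S₂/S₁) | S₁ = x]`, read off the disintegration of `μ` along `S₁`. -/
def condLambda (τ : ℝ) (μ : Measure (ℝ × ℝ)) [IsFiniteMeasure μ] (x : ℝ) : ℝ :=
  ∫ y, Lf τ (y / x) ∂μ.condKernel x

lemma measurable_Lf_div (τ : ℝ) : Measurable fun p : ℝ × ℝ => Lf τ (p.2 / p.1) :=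
  measurable_const.mul (Real.measurable_log.comp (measurable_snd.div measurable_fst))

lemma isCondLambda_condLambda {τ : ℝ} {μ : Measure (ℝ × ℝ)} [IsFiniteMeasure μ]
    (hL : Integrable (fun p => Lf τ (p.2 / p.1)) μ) : IsCondLambda τ μ (condLambda τ μ) := by
  have hm : Measurable (condLambda τ μ) :=
    ((measurable_Lf_div τ).stronglyMeasurable.integral_kernel_prod_right').measurable
  refine ⟨hm, hL.integral_condKernel.comp_measurable measurable_fst, fun h hh hb => ?_⟩
  rw [integral_fst_mul_eq_integral_condKernel hL hh hb]
  change ∫ x, h x * condLambda τ μ x ∂μ.map Prod.fst = _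
  exact integral_map measurable_fst.aemeasurable (hh.mul hm).aestronglyMeasurable

lemma IsCondLambda.ae_eq {τ : ℝ} {μ : Measure (ℝ × ℝ)} {Λ Λ' : ℝ → ℝ}
    (hΛ : IsCondLambda τ μ Λ) (hΛ' : IsCondLambda τ μ Λ') : ∀ᵐ p ∂μ, Λ p.1 = Λ' p.1 :=
  ae_eq_comp_of_forall_integral_comp_mul_eq measurable_fst hΛ.1 hΛ'.1 hΛ.2.1 hΛ'.2.1
    fun h hh hb => (hΛ.2.2 h hh hb).symm.trans (hΛ'.2.2 h hh hb)

lemma IsCondLambda.integral_mul_Lf_sub_eq_zero {τ : ℝ} {μ : Measure (ℝ × ℝ)} {Λ : ℝ → ℝ}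
    (hΛ : IsCondLambda τ μ Λ) (hL : Integrable (fun p => Lf τ (p.2 / p.1)) μ) {h : ℝ → ℝ}
    (hh : Measurable h) (hb : ∀ x, |h x| ≤ 1) :
    ∫ p, h p.1 * (Lf τ (p.2 / p.1) - Λ p.1) ∂μ = 0 := by
  have hhf : Measurable fun p : ℝ × ℝ => h p.1 := hh.comp measurable_fst
  simp only [mul_sub]
  rw [integral_sub (hL.mul_of_abs_le_one hhf fun p => hb _)
    (hΛ.2.1.mul_of_abs_le_one hhf fun p => hb _), hΛ.2.2 h hh hb, sub_self]

namespace MemM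

variable {μ₁ μ₂ : Measure ℝ} {μ : Measure (ℝ × ℝ)}

lemma integrable_comp_fst (hμ : MemM μ₁ μ₂ μ) {g : ℝ → ℝ} (hg : Integrable g μ₁) :
    Integrable (fun p => g p.1) μ :=
  (hμ.fst ▸ hg).comp_measurable measurable_fst

lemma integrable_comp_snd (hμ : MemM μ₁ μ₂ μ) {g : ℝ → ℝ} (hg : Integrable g μ₂) :
    Integrable (fun p => g p.2) μ :=
  (hμ.snd ▸ hg).comp_measurable measurable_snd

lemma integrable_Lf (hμ : MemM μ₁ μ₂ μ) (τ : ℝ) {m₁ m₂ : ℝ} (h₁ : IsMarginal m₁ μ₁)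
    (h₂ : IsMarginal m₂ μ₂) : Integrable (fun p => Lf τ (p.2 / p.1)) μ := by
  refine (((hμ.integrable_comp_snd h₂.integrable_log).sub
    (hμ.integrable_comp_fst h₁.integrable_log)).const_mul (-(2 / τ))).congr ?_
  filter_upwards [ae_of_ae_map measurable_fst.aemeasurable (hμ.fst ▸ h₁.ae_pos),
    ae_of_ae_map measurable_snd.aemeasurable (hμ.snd ▸ h₂.ae_pos)] with p hp₁ hp₂
  simp only [Lf, Pi.sub_apply, Real.log_div hp₂.ne' hp₁.ne']

lemma ae_integral_condKernel_id [IsFiniteMeasure μ] (hμ : MemM μ₁ μ₂ μ)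
    (h₁ : Integrable (fun x => x) μ₁) (h₂ : Integrable (fun y => y) μ₂) :
    ∀ᵐ x ∂μ₁, ∫ y, y ∂μ.condKernel x = x := by
  have hG : Integrable (fun p : ℝ × ℝ => p.2 - p.1) μ :=
    (hμ.integrable_comp_snd h₂).sub (hμ.integrable_comp_fst h₁)
  have hmeas : Measurable fun x => ∫ y, (y - x) ∂μ.condKernel x :=
    ((measurable_snd.sub measurable_fst).stronglyMeasurable.integral_kernel_prod_right').measurable
  have hzero : ∀ᵐ x ∂μ.fst, ∫ y, (y - x) ∂μ.condKernel x = 0 :=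
    ae_eq_zero_of_forall_integral_comp_mul_eq_zero (f := fun x => x) hmeas hG.integral_condKernel
      fun h hh hb => by
        rw [← integral_fst_mul_eq_integral_condKernel hG hh hb]
        exact hμ.mart h hh hb
  rw [← hμ.fst]
  filter_upwards [hzero, (hμ.integrable_comp_snd h₂).condKernel_ae] with x hx hint
  rwa [integral_sub hint (integrable_const x), integral_const, probReal_univ, one_smul,
    sub_eq_zero] at hx

lemma condLambda_nonneg [IsFiniteMeasure μ] {τ m₁ m₂ : ℝ} (hτ : 0 < τ) (hμ : MemM μ₁ μ₂ μ)
    (h₁ : IsMarginal m₁ μ₁) (h₂ : IsMarginal m₂ μ₂) : ∀ᵐ x ∂μ₁, 0 ≤ condLambda τ μ x := by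
  have hL := hμ.integrable_Lf τ h₁ h₂
  have hpos : ∀ᵐ p ∂μ, 0 < p.2 := ae_of_ae_map measurable_snd.aemeasurable (hμ.snd ▸ h₂.ae_pos)
  rw [← μ.disintegrate μ.condKernel] at hpos
  have hfst : μ.fst = μ₁ := hμ.fst
  filter_upwards [h₁.ae_pos, hfst ▸ Measure.ae_ae_of_ae_compProd hpos, hfst ▸ hL.condKernel_ae,
    hfst ▸ (hμ.integrable_comp_snd h₂.int_id).condKernel_ae,
    hμ.ae_integral_condKernel_id h₁.int_id h₂.int_id] with x hx hκpos hLx hidx hmean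
  exact integral_Lf_div_nonneg hτ hx hκpos hidx hmean hLx

lemma memMV_map {τ : ℝ} {Λ : ℝ → ℝ} (hμ : MemM μ₁ μ₂ μ)
    (hL : Integrable (fun p => Lf τ (p.2 / p.1)) μ) (hΛ : IsCondLambda τ μ Λ)
    (hΛ_nonneg : ∀ᵐ p ∂μ, 0 ≤ Λ p.1) :
    MemMV τ μ₁ μ₂ (μ.map fun p => (p.1, p.2, √(Λ p.1))) := by
  have := hμ.prob
  set F : ℝ × ℝ → ℝ × ℝ × ℝ := fun p => (p.1, p.2, √(Λ p.1))
  have hsq : Measurable fun x => √(Λ x) := hΛ.1.sqrt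
  have hF : Measurable F := measurable_fst.prodMk (measurable_snd.prodMk (hsq.comp measurable_fst))
  have hS₂ : Measurable fun q : ℝ × ℝ × ℝ => q.2.1 := measurable_fst.comp measurable_snd
  have hV : Measurable fun q : ℝ × ℝ × ℝ => q.2.2 := measurable_snd.comp measurable_snd
  have htriple_test : ∀ h : ℝ → ℝ → ℝ, Measurable (Function.uncurry h) →
      Measurable fun q : ℝ × ℝ × ℝ => h q.1 q.2.2 :=
    fun h hh => hh.comp (measurable_fst.prodMk hV)
  have hsqrt_test : ∀ h : ℝ → ℝ → ℝ, Measurable (Function.uncurry h) →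
      Measurable fun x => h x √(Λ x) :=
    fun h hh => hh.comp (measurable_id.prodMk hsq)
  refine ⟨Measure.isProbabilityMeasure_map hF.aemeasurable, ?_, ?_, ?_, ?_,
    fun h hh hb => ?_, fun h hh hb => ?_⟩
  · rw [Measure.map_map measurable_fst hF]; exact hμ.fst
  · rw [Measure.map_map hS₂ hF]; exact hμ.snd
  · rw [Measure.map_apply hF (measurableSet_lt hV measurable_const)]
    simp [F, not_lt.2 (Real.sqrt_nonneg _)]
  · rw [integrable_map_measure (hV.pow_const 2).aestronglyMeasurable hF.aemeasurable]
    exact hΛ.2.1.congr (hΛ_nonneg.mono fun p hp => (Real.sq_sqrt hp).symm)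
  · rw [integral_map (f := fun q => h q.1 q.2.2 * (q.2.1 - q.1)) hF.aemeasurable
      ((htriple_test h hh).mul (hS₂.sub measurable_fst)).aestronglyMeasurable]
    exact hμ.mart _ (hsqrt_test h hh) fun x => hb x _
  · rw [integral_map (f := fun q => h q.1 q.2.2 * (Lf τ (q.2.1 / q.1) - q.2.2 ^ 2))
      hF.aemeasurable ((htriple_test h hh).mul (((measurable_Lf_div τ).comp
      (measurable_fst.prodMk hS₂)).sub (hV.pow_const 2))).aestronglyMeasurable]
    rw [← hΛ.integral_mul_Lf_sub_eq_zero hL (hsqrt_test h hh) fun x => hb _ _]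
    exact integral_congr_ae (hΛ_nonneg.mono fun p hp => by simp only [F, Real.sq_sqrt hp])

end MemM

theorem projection_MV_M_general (τ S₀ : ℝ) (hτ : 0 < τ)
    (μ₁ μ₂ : Measure ℝ) (h₁ : IsMarginal S₀ μ₁) (h₂ : IsMarginal S₀ μ₂) :
    (∀ μ : Measure (ℝ × ℝ × ℝ), MemMV τ μ₁ μ₂ μ →
      MemM μ₁ μ₂ (μ.map (fun p => (p.1, p.2.1)))) ∧
    (∀ μ : Measure (ℝ × ℝ), MemM μ₁ μ₂ μ →
      (∃ Λ : ℝ → ℝ, IsCondLambda τ μ Λ) ∧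
      ∀ Λ : ℝ → ℝ, IsCondLambda τ μ Λ →
        (∀ᵐ p ∂μ, 0 ≤ Λ p.1) ∧
        MemMV τ μ₁ μ₂ (μ.map (fun p => (p.1, p.2, Real.sqrt (Λ p.1))))) := by
  refine ⟨fun μ hμ => hμ.memM_map, fun μ hμ => ?_⟩
  have := hμ.prob
  have hL := hμ.integrable_Lf τ h₁ h₂
  have hΛ₀ := isCondLambda_condLambda hL
  refine ⟨⟨_, hΛ₀⟩, fun Λ hΛ => ?_⟩
  have hΛ_nonneg : ∀ᵐ p ∂μ, 0 ≤ Λ p.1 := by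
    filter_upwards [hΛ.ae_eq hΛ₀, ae_of_ae_map measurable_fst.aemeasurable
      (hμ.fst ▸ hμ.condLambda_nonneg hτ h₁ h₂)] with p hp hp₀
    exact hp ▸ hp₀
  exact ⟨hΛ_nonneg, hμ.memMV_map hL hΛ hΛ_nonneg⟩

/-- (i) The projection onto the first two coordinates maps `M_V(μ₁,μ₂)` into
`M(μ₁,μ₂)`; (ii) for `μ ∈ M(μ₁,μ₂)`, a version `Λ_μ` of the conditional price of the
FSLC exists, every such version is `μ`-a.s. nonnegative, and the law of
`(S₁,S₂,√(Λ_μ(S₁)))` under `μ` belongs to `M_V(μ₁,μ₂)`. -/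
theorem projection_MV_M (τ S₀ : ℝ) (hτ : 0 < τ) (hS₀ : 0 < S₀)
    (μ₁ μ₂ : Measure ℝ) (h₁ : IsMarginal S₀ μ₁) (h₂ : IsMarginal S₀ μ₂) :
    (∀ μ : Measure (ℝ × ℝ × ℝ), MemMV τ μ₁ μ₂ μ →
      MemM μ₁ μ₂ (μ.map (fun p => (p.1, p.2.1)))) ∧
    (∀ μ : Measure (ℝ × ℝ), MemM μ₁ μ₂ μ →
      (∃ Λ : ℝ → ℝ, IsCondLambda τ μ Λ) ∧
      ∀ Λ : ℝ → ℝ, IsCondLambda τ μ Λ →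
        (∀ᵐ p ∂μ, 0 ≤ Λ p.1) ∧
        MemMV τ μ₁ μ₂ (μ.map (fun p => (p.1, p.2, Real.sqrt (Λ p.1))))) :=
  projection_MV_M_general τ S₀ hτ μ₁ μ₂ h₁ h₂
end
end

section
/- Let ξ:[0,∞)→[0,∞) be convex, strictly increasing with ξ(0)=0 and right derivative ξ'(0)=0, and of superlinear growth. Then there exists a continuous, increasing function φ:[0,∞)→[0,∞) with φ(0)=0 and φ(y)→∞ as y→∞ such that, setting Δ^L(v) = −1−φ(v²), the inequality φ(v²)v² ≤ Δ^L(v)(L(s₂/s₁)−v²) + L(s₂) − L(s₁) + ξ(|L(s₁)|) + ξ(|L(s₂)|) holds for all s₁,s₂>0 and v≥0. -/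
open MeasureTheory Set Filter

noncomputable section

/-!
Take for `φ(y)` the largest `p` with `p t ≤ y/2 + ξ(t)` for all `t ≥ 0`, i.e. the infimum of
`(y/2 + ξ(t))/t` over `t > 0`. As an infimum of affine functions of `y` it is concave, hence
continuous on `(0,∞)`; the condition `ξ(t)/t → 0` at `0` gives `φ(0) = 0` and continuity at `0`,
and superlinearity of `ξ` gives `φ(y) → ∞`. Since `L(s₂/s₁) = L(s₂) - L(s₁) ≤ |L(s₁)| + |L(s₂)|`,
the hedging inequality reduces to `φ(y)(|L(s₁)| + |L(s₂)|) ≤ y + ξ(|L(s₁)|) + ξ(|L(s₂)|)`,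
which is the defining property of `φ` applied at `t = |L(s₁)|` and `t = |L(s₂)|`.
-/

open Topology

lemma Lf_div (τ : ℝ) {x y : ℝ} (hx : x ≠ 0) (hy : y ≠ 0) : Lf τ (x / y) = Lf τ x - Lf τ y := by
  simp only [Lf, Real.log_div hx hy]
  ring

def slopeBound (ξ : ℝ → ℝ) (y : ℝ) : ℝ := sInf ((fun t => (y + ξ t) / t) '' Ioi 0)

section slopeBound

variable {ξ : ℝ → ℝ} {y : ℝ}

lemma slopeBound_nonneg (hξ : ∀ x, 0 ≤ x → 0 ≤ ξ x) (hy : 0 ≤ y) : 0 ≤ slopeBound ξ y := by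
  refine le_csInf ⟨_, mem_image_of_mem _ (mem_Ioi.2 one_pos)⟩ ?_
  rintro _ ⟨t, ht, rfl⟩
  exact div_nonneg (add_nonneg hy (hξ t (le_of_lt ht))) (le_of_lt ht)

lemma slopeBound_le (hξ : ∀ x, 0 ≤ x → 0 ≤ ξ x) (hy : 0 ≤ y) {t : ℝ} (ht : 0 < t) :
    slopeBound ξ y ≤ (y + ξ t) / t := by
  refine csInf_le ⟨0, ?_⟩ (mem_image_of_mem _ ht)
  rintro _ ⟨s, hs, rfl⟩
  exact div_nonneg (add_nonneg hy (hξ s (le_of_lt hs))) (le_of_lt hs)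

lemma le_slopeBound {p : ℝ} (hp : ∀ t, 0 < t → p ≤ (y + ξ t) / t) : p ≤ slopeBound ξ y := by
  refine le_csInf ⟨_, mem_image_of_mem _ (mem_Ioi.2 one_pos)⟩ ?_
  rintro _ ⟨t, ht, rfl⟩
  exact hp t ht

lemma slopeBound_mul_le (hξ : ∀ x, 0 ≤ x → 0 ≤ ξ x) (hy : 0 ≤ y) {t : ℝ} (ht : 0 ≤ t) :
    slopeBound ξ y * t ≤ y + ξ t := by
  rcases ht.eq_or_lt with rfl | ht
  · simpa using add_nonneg hy (hξ 0 le_rfl)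
  · exact (le_div_iff₀ ht).1 (slopeBound_le hξ hy ht)

lemma monotoneOn_slopeBound (hξ : ∀ x, 0 ≤ x → 0 ≤ ξ x) : MonotoneOn (slopeBound ξ) (Ici 0) :=
  fun _ hy₁ _ _ hy₁₂ => le_slopeBound fun t ht =>
    (slopeBound_le hξ hy₁ ht).trans (div_le_div_of_nonneg_right (by linarith) (le_of_lt ht))

lemma concaveOn_slopeBound (hξ : ∀ x, 0 ≤ x → 0 ≤ ξ x) : ConcaveOn ℝ (Ici 0) (slopeBound ξ) := by
  refine ⟨convex_Ici 0, fun y₁ hy₁ y₂ hy₂ a b ha hb hab => le_slopeBound fun t ht => ?_⟩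
  calc a • slopeBound ξ y₁ + b • slopeBound ξ y₂
      ≤ a * ((y₁ + ξ t) / t) + b * ((y₂ + ξ t) / t) := by
        simp only [smul_eq_mul]
        gcongr
        exacts [slopeBound_le hξ hy₁ ht, slopeBound_le hξ hy₂ ht]
    _ = (a • y₁ + b • y₂ + ξ t) / t := by
        simp only [smul_eq_mul]
        field_simp
        linear_combination ξ t * hab

lemma tendsto_slopeBound_zero (hξ : ∀ x, 0 ≤ x → 0 ≤ ξ x)
    (hξ₀ : Tendsto (fun x => ξ x / x) (𝓝[>] 0) (𝓝 0)) :
    Tendsto (slopeBound ξ) (𝓝[≥] 0) (𝓝 0) := by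
  refine tendsto_order.2 ⟨fun c hc => ?_, fun c hc => ?_⟩
  · filter_upwards [self_mem_nhdsWithin] with y hy
    exact hc.trans_le (slopeBound_nonneg hξ hy)
  · -- fix `t` with `ξ t / t < c / 2`; then `φ y ≤ y / t + ξ t / t < c` once `y < c t / 2`
    obtain ⟨t, hξt, ht⟩ :=
      ((hξ₀.eventually (gt_mem_nhds (half_pos hc))).and self_mem_nhdsWithin).exists
    have ht : 0 < t := ht
    filter_upwards [nhdsWithin_le_nhds (Iio_mem_nhds (by positivity : 0 < c * t / 2)),
      self_mem_nhdsWithin] with y hyc hy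
    have hyt : y / t < c / 2 := by
      rw [div_lt_iff₀ ht]
      linarith [mem_Iio.1 hyc]
    calc slopeBound ξ y ≤ (y + ξ t) / t := slopeBound_le hξ hy ht
      _ = y / t + ξ t / t := add_div _ _ _
      _ < c := by linarith

lemma slopeBound_zero (hξ : ∀ x, 0 ≤ x → 0 ≤ ξ x)
    (hξ₀ : Tendsto (fun x => ξ x / x) (𝓝[>] 0) (𝓝 0)) : slopeBound ξ 0 = 0 :=
  tendsto_nhds_unique (tendsto_pure_nhds _ _)
    ((tendsto_slopeBound_zero hξ hξ₀).mono_left (pure_le_nhdsWithin self_mem_Ici))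

lemma continuousOn_slopeBound (hξ : ∀ x, 0 ≤ x → 0 ≤ ξ x)
    (hξ₀ : Tendsto (fun x => ξ x / x) (𝓝[>] 0) (𝓝 0)) : ContinuousOn (slopeBound ξ) (Ici 0) := by
  intro y hy
  rcases (mem_Ici.1 hy).eq_or_lt with rfl | hy
  · rw [ContinuousWithinAt, slopeBound_zero hξ hξ₀]
    exact tendsto_slopeBound_zero hξ hξ₀
  · have h := (concaveOn_slopeBound hξ).continuousOn_interior
    rw [interior_Ici] at h
    exact ((h y hy).continuousAt (isOpen_Ioi.mem_nhds hy)).continuousWithinAt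

lemma tendsto_slopeBound_atTop (hξ : ∀ x, 0 ≤ x → 0 ≤ ξ x)
    (hξ_top : Tendsto (fun x => ξ x / x) atTop atTop) : Tendsto (slopeBound ξ) atTop atTop := by
  refine tendsto_atTop.2 fun M => ?_
  -- beyond `T` the slope of `ξ` exceeds `M`; below `T` the term `y / t` does once `y ≥ T M`
  obtain ⟨T, hT⟩ := (hξ_top.eventually_ge_atTop (max M 0)).exists_forall_of_atTop
  filter_upwards [eventually_ge_atTop (max T 1 * max M 0), eventually_ge_atTop 0] with y hyM hy
  refine (le_max_left M 0).trans (le_slopeBound fun t ht => (le_div_iff₀ ht).2 ?_)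
  rcases le_or_gt (max T 1) t with htT | htT
  · have := (le_div_iff₀ ht).1 (hT t ((le_max_left T 1).trans htT))
    nlinarith [le_max_right M 0]
  · nlinarith [le_max_right M 0, hξ t (le_of_lt ht)]

end slopeBound

theorem exists_hedge_for_vix_power_general (τ : ℝ)
    (ξ : ℝ → ℝ)
    (hξ_nonneg : ∀ x : ℝ, 0 ≤ x → 0 ≤ ξ x)
    (hξ_deriv0 : Tendsto (fun x => ξ x / x) (nhdsWithin 0 (Set.Ioi 0)) (nhds 0))
    (hξ_superlin : Tendsto (fun x => ξ x / x) atTop atTop) :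
    ∃ φ : ℝ → ℝ,
      ContinuousOn φ (Set.Ici 0) ∧
      MonotoneOn φ (Set.Ici 0) ∧
      (∀ y : ℝ, 0 ≤ y → 0 ≤ φ y) ∧
      φ 0 = 0 ∧
      Tendsto φ atTop atTop ∧
      ∀ s₁ s₂ v : ℝ, 0 < s₁ → 0 < s₂ → 0 ≤ v →
        φ (v ^ 2) * v ^ 2 ≤
          (-1 - φ (v ^ 2)) * (Lf τ (s₂ / s₁) - v ^ 2)
            + Lf τ s₂ - Lf τ s₁ + ξ |Lf τ s₁| + ξ |Lf τ s₂| := by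
  have hhalf : MapsTo (fun y : ℝ => y / 2) (Ici 0) (Ici 0) := fun _ hy => div_nonneg (mem_Ici.1 hy) two_pos.le
  refine ⟨fun y => slopeBound ξ (y / 2),
    (continuousOn_slopeBound hξ_nonneg hξ_deriv0).comp (continuousOn_id.div_const 2) hhalf,
    fun y hy z hz hyz => monotoneOn_slopeBound hξ_nonneg (hhalf hy) (hhalf hz) (by linarith),
    fun y hy => slopeBound_nonneg hξ_nonneg (hhalf hy), by simpa using slopeBound_zero hξ_nonneg hξ_deriv0,
    (tendsto_slopeBound_atTop hξ_nonneg hξ_superlin).comp (tendsto_id.atTop_div_const two_pos),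
    fun s₁ s₂ v hs₁ hs₂ _ => ?_⟩
  rw [Lf_div τ hs₂.ne' hs₁.ne']
  have hy : 0 ≤ v ^ 2 / 2 := by positivity
  have hφ := slopeBound_nonneg hξ_nonneg hy
  have h₁ := slopeBound_mul_le hξ_nonneg hy (abs_nonneg (Lf τ s₁))
  have h₂ := slopeBound_mul_le hξ_nonneg hy (abs_nonneg (Lf τ s₂))
  have hL : Lf τ s₂ - Lf τ s₁ ≤ |Lf τ s₁| + |Lf τ s₂| := by
    linarith [le_abs_self (Lf τ s₂), neg_abs_le (Lf τ s₁)]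
  nlinarith [mul_le_mul_of_nonneg_left hL hφ]

/-- Superhedge for a superlinearly growing function of `v²`: there is a continuous,
increasing `φ : [0,∞) → [0,∞)` with `φ(0) = 0` and `φ(∞) = ∞` such that, with
`Δ^L(v) = -1 - φ(v²)`, the payoff `φ(v²)v²` is dominated by
`Δ^L(v)(L(s₂/s₁) - v²) + L(s₂) - L(s₁) + ξ(|L(s₁)|) + ξ(|L(s₂)|)`
for all `s₁,s₂ > 0` and `v ≥ 0`. -/
theorem exists_hedge_for_vix_power (τ : ℝ) (hτ : 0 < τ)
    (ξ : ℝ → ℝ)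
    (hξ_cvx : ConvexOn ℝ (Set.Ici 0) ξ)
    (hξ_mono : StrictMonoOn ξ (Set.Ici 0))
    (hξ_nonneg : ∀ x : ℝ, 0 ≤ x → 0 ≤ ξ x)
    (hξ_zero : ξ 0 = 0)
    (hξ_deriv0 : Tendsto (fun x => ξ x / x) (nhdsWithin 0 (Set.Ioi 0)) (nhds 0))
    (hξ_superlin : Tendsto (fun x => ξ x / x) atTop atTop) :
    ∃ φ : ℝ → ℝ,
      ContinuousOn φ (Set.Ici 0) ∧
      MonotoneOn φ (Set.Ici 0) ∧
      (∀ y : ℝ, 0 ≤ y → 0 ≤ φ y) ∧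
      φ 0 = 0 ∧
      Tendsto φ atTop atTop ∧
      ∀ s₁ s₂ v : ℝ, 0 < s₁ → 0 < s₂ → 0 ≤ v →
        φ (v ^ 2) * v ^ 2 ≤
          (-1 - φ (v ^ 2)) * (Lf τ (s₂ / s₁) - v ^ 2)
            + Lf τ s₂ - Lf τ s₁ + ξ |Lf τ s₁| + ξ |Lf τ s₂| :=
  exists_hedge_for_vix_power_general τ ξ hξ_nonneg hξ_deriv0 hξ_superlin
end
end

section
/- Let (Ω,ℱ) be a measurable space and w=(w¹,…,wⁿ):Ω→ℝⁿ measurable such that for every α∈ℝⁿ with nonnegative entries, if α·w(ω)≥0 for all ω∈Ω, then α·w(ω)=0 for all ω∈Ω. Let Π be the set of probability measures π on (Ω,ℱ) with ∫|wⁱ|dπ<∞ and ∫wⁱdπ≤0 for i=1,…,n. Then for any measurable f:Ω→ℝ that is π-integrable for every π∈Π, one has sup_{π∈Π}∫f dπ = inf{x∈ℝ : there exists α∈ℝⁿ with nonnegative entries such that x+α·w(ω) ≥ f(ω) for all ω∈Ω}, and the infimum is attained whenever it is finite. -/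
/-!
If `x` is not a superhedging price of `f`, separate the convex hull of the points
`(f ω - x, w ω)` from the cone `{(a, b) | 0 ≤ a, b ≤ 0}`. A separating functional either
rescales to a superhedge of `f` at price `x`, which is impossible, or is a position `α ≥ 0`
with `α·w ≥ 0`, hence `α·w = 0` by no-arbitrage. In the latter case one asset `wᵢ` is a
combination of the others, and dropping it while allowing short positions in the other assets
charged by `α` leaves the attainable payoffs unchanged; induction on the number of assets then
yields a point of the convex hull in the cone, i.e. a finitely supported `π ∈ Π` with
`∫ f dπ ≥ x`.

The infimum is attained because the set of superhedging prices is closed. Take superhedges of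
minimal total size along a convergent sequence of prices; if they were unbounded, their
normalised limit `β ≥ 0` would satisfy `β·w ≥ 0`, hence `β·w = 0`, and subtracting a small
multiple of `β` from them would make them smaller.
-/

open MeasureTheory Set Filter

open scoped Pointwise Topology

theorem Convex.exists_dual_nonneg_of_zero_notMem {V : Type*} [NormedAddCommGroup V]
    [NormedSpace ℝ V] [FiniteDimensional ℝ V] {C : Set V} (hC : Convex ℝ C) (hne : C.Nonempty)
    (h0 : (0 : V) ∉ C) :
    ∃ φ : V →ₗ[ℝ] ℝ, φ ≠ 0 ∧ ∀ c ∈ C, 0 ≤ φ c := by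
  by_cases hint : (interior C).Nonempty
  · obtain ⟨f, hf, hfC⟩ :=
      geometric_hahn_banach_of_nonempty_interior_point hC (fun h => h0 (interior_subset h)) hint
    refine ⟨-(f : V →ₗ[ℝ] ℝ), neg_ne_zero.2 fun h => hf (ContinuousLinearMap.coe_injective h),
      fun c hc => ?_⟩
    simpa using hfC c hc
  -- Otherwise `C` lies in a proper affine subspace, on which a nonzero functional is constant.
  obtain ⟨c₀, hc₀⟩ := hne
  have hspan : (affineSpan ℝ C).direction < ⊤ := by
    rw [lt_top_iff_ne_top, Ne, AffineSubspace.direction_eq_top_iff_of_nonempty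
      ((affineSpan_nonempty ℝ).2 ⟨c₀, hc₀⟩), ← hC.interior_nonempty_iff_affineSpan_eq_top]
    exact hint
  obtain ⟨f, hf, hker⟩ := Submodule.exists_dual_map_eq_bot_of_lt_top hspan inferInstance
  have hconst : ∀ c ∈ C, f c = f c₀ := fun c hc => by
    have hmem : c - c₀ ∈ (affineSpan ℝ C).direction :=
      AffineSubspace.vsub_mem_direction (subset_affineSpan ℝ C hc) (subset_affineSpan ℝ C hc₀)
    have : f (c - c₀) = 0 := LinearMap.le_ker_iff_map.2 hker hmem
    rwa [map_sub, sub_eq_zero] at this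
  rcases le_total 0 (f c₀) with h | h
  · exact ⟨f, hf, fun c hc => hconst c hc ▸ h⟩
  · exact ⟨-f, neg_ne_zero.2 hf, fun c hc => by simpa [hconst c hc] using h⟩

theorem LinearMap.nonpos_of_nonneg_on_sub {V : Type*} [AddCommGroup V] [Module ℝ V]
    {φ : V →ₗ[ℝ] ℝ} {A T : Set V} (hA : A.Nonempty) (hT : ∀ t ∈ T, ∀ s : ℝ, 0 ≤ s → s • t ∈ T)
    (hφ : ∀ c ∈ A - T, 0 ≤ φ c) {t : V} (ht : t ∈ T) : φ t ≤ 0 := by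
  obtain ⟨a, ha⟩ := hA
  have hray : ∀ s : ℝ, 0 ≤ s → s * φ t ≤ φ a := fun s hs => by
    simpa [sub_nonneg] using hφ _ (sub_mem_sub ha (hT t ht s hs))
  by_contra! hpos
  have := hray ((φ a + 1) / φ t) (div_nonneg (by linarith [hray 0 le_rfl]) hpos.le)
  rw [div_mul_cancel₀ _ hpos.ne'] at this
  linarith

section

variable {ι : Type*}

theorem LinearMap.apply_eq_fst_add_sum [Fintype ι] [DecidableEq ι]
    (φ : ℝ × (ι → ℝ) →ₗ[ℝ] ℝ) (v : ℝ × (ι → ℝ)) :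
    φ v = v.1 * φ (1, 0) + ∑ j, v.2 j * φ (0, Pi.single j 1) := by
  have hv : v = v.1 • ((1 : ℝ), (0 : ι → ℝ)) + ∑ j, v.2 j • ((0 : ℝ), (Pi.single j 1 : ι → ℝ)) := by
    ext j
    · simp [Prod.fst_sum]
    · simp [Prod.snd_sum, Finset.sum_apply, Pi.single_apply]
  conv_lhs => rw [hv]
  simp only [map_add, map_sum, map_smul, smul_eq_mul]

/-- The expectations `(∫ g, ∫ w)` admissible for a pricing measure when the assets in `S` are
traded, those in `E` in both directions. -/
def feasibleMoments (S : Finset ι) (E : Set ι) : Set (ℝ × (ι → ℝ)) :=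
  {v | 0 ≤ v.1 ∧ ∀ j ∈ S, v.2 j ≤ 0 ∧ (j ∈ E → v.2 j = 0)}

theorem smul_mem_feasibleMoments {S : Finset ι} {E : Set ι} {v : ℝ × (ι → ℝ)}
    (hv : v ∈ feasibleMoments S E) {s : ℝ} (hs : 0 ≤ s) : s • v ∈ feasibleMoments S E :=
  ⟨mul_nonneg hs hv.1, fun j hj => ⟨mul_nonpos_of_nonneg_of_nonpos hs (hv.2 j hj).1,
    fun hjE => by simp [(hv.2 j hj).2 hjE]⟩⟩

theorem convex_feasibleMoments (S : Finset ι) (E : Set ι) : Convex ℝ (feasibleMoments S E) := by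
  intro v hv u hu a b ha hb _
  refine ⟨?_, fun j hj => ⟨?_, fun hjE => ?_⟩⟩
  · simpa using add_nonneg (mul_nonneg ha hv.1) (mul_nonneg hb hu.1)
  · simpa using add_nonpos (mul_nonpos_of_nonneg_of_nonpos ha (hv.2 j hj).1)
      (mul_nonpos_of_nonneg_of_nonpos hb (hu.2 j hj).1)
  · simp [(hv.2 j hj).2 hjE, (hu.2 j hj).2 hjE]

theorem LinearMap.exists_eq_of_nonpos_on_feasibleMoments [Fintype ι] [DecidableEq ι]
    {S : Finset ι} {E : Set ι} (φ : ℝ × (ι → ℝ) →ₗ[ℝ] ℝ)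
    (hφ : ∀ t ∈ feasibleMoments S E, φ t ≤ 0) :
    ∃ (β : ℝ) (α : ι → ℝ), 0 ≤ β ∧ (∀ j ∈ S, j ∉ E → 0 ≤ α j) ∧
      ∀ v, φ v = ∑ j ∈ S, α j * v.2 j - β * v.1 := by
  set α : ι → ℝ := fun j => φ (0, Pi.single j 1)
  have hα : ∀ j ∈ S, j ∉ E → 0 ≤ α j := fun j _ hjE => by
    have := hφ (-(0, Pi.single j 1)) ⟨by simp, fun k _ => ?_⟩
    · rw [map_neg] at this
      linarith
    · by_cases hkj : k = j
      · subst hkj; simp [hjE]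
      · simp [hkj]
  have hαS : ∀ j ∉ S, α j = 0 := fun j hjS => by
    have hmem : ∀ s : ℝ, s • ((0 : ℝ), (Pi.single j 1 : ι → ℝ)) ∈ feasibleMoments S E := fun s =>
      ⟨by simp, fun k hk => by simp [show k ≠ j by rintro rfl; exact hjS hk]⟩
    have h₁ := hφ _ (hmem 1)
    have h₂ := hφ _ (hmem (-1))
    rw [map_smul, smul_eq_mul] at h₁ h₂
    linarith
  refine ⟨-φ (1, 0), α, neg_nonneg.2 (hφ _ ⟨zero_le_one, fun j _ => by simp⟩), hα, fun v => ?_⟩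
  rw [φ.apply_eq_fst_add_sum, Finset.sum_subset (Finset.subset_univ S) fun j _ hj => by
    simp [hαS j hj], Finset.sum_congr rfl fun j _ => mul_comm (v.2 j) _]
  ring

theorem exists_strategy_of_disjoint_feasibleMoments [Fintype ι] [DecidableEq ι]
    {Y : Set (ℝ × (ι → ℝ))} (hY : Y.Nonempty) {S : Finset ι} {E : Set ι}
    (hdisj : Disjoint (convexHull ℝ Y) (feasibleMoments S E)) :
    ∃ (β : ℝ) (α : ι → ℝ), 0 ≤ β ∧ (∀ j ∈ S, j ∉ E → 0 ≤ α j) ∧ (0 < β ∨ ∃ i ∈ S, α i ≠ 0) ∧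
      ∀ y ∈ Y, β * y.1 ≤ ∑ j ∈ S, α j * y.2 j := by
  have hT0 : (0 : ℝ × (ι → ℝ)) ∈ feasibleMoments S E := ⟨le_rfl, fun j _ => ⟨le_rfl, fun _ => rfl⟩⟩
  have h0 : (0 : ℝ × (ι → ℝ)) ∉ convexHull ℝ Y - feasibleMoments S E := by
    rintro ⟨a, ha, t, ht, hat⟩
    exact hdisj.ne_of_mem ha ht (sub_eq_zero.1 hat)
  obtain ⟨φ, hφ, hφC⟩ := ((convex_convexHull ℝ Y).sub
    (convex_feasibleMoments S E)).exists_dual_nonneg_of_zero_notMem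
    ((hY.mono (subset_convexHull ℝ Y)).sub ⟨0, hT0⟩) h0
  obtain ⟨β, α, hβ, hα, hφ_eq⟩ := φ.exists_eq_of_nonpos_on_feasibleMoments fun t ht =>
    φ.nonpos_of_nonneg_on_sub (hY.mono (subset_convexHull ℝ Y))
      (fun t ht s hs => smul_mem_feasibleMoments ht hs) hφC ht
  refine ⟨β, α, hβ, hα, ?_, fun y hy => ?_⟩
  · by_contra! h
    refine hφ (LinearMap.ext fun v => ?_)
    rw [hφ_eq, le_antisymm h.1 hβ, Finset.sum_eq_zero fun j hj => by rw [h.2 j hj, zero_mul]]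
    simp
  · have := hφC (y - 0) (sub_mem_sub (subset_convexHull ℝ Y hy) hT0)
    rw [sub_zero, hφ_eq] at this
    linarith

theorem eventually_forall_nonneg_add_mul [Finite ι] {s : Set ι} {a b : ι → ℝ}
    (h : ∀ i ∈ s, 0 ≤ b i ∧ (0 < b i ∨ 0 ≤ a i)) :
    ∀ᶠ t in atTop, ∀ i ∈ s, 0 ≤ a i + t * b i := by
  refine eventually_all.2 fun i => ?_
  by_cases hi : i ∈ s
  · obtain ⟨hb, hb' | ha⟩ := h i hi
    · filter_upwards [(tendsto_atTop_add_const_left _ (a i)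
        (tendsto_id.atTop_mul_const hb')).eventually_ge_atTop 0] with t ht _ using ht
    · filter_upwards [eventually_ge_atTop 0] with t ht _ using add_nonneg ha (mul_nonneg ht hb)
  · exact Eventually.of_forall fun t h => absurd h hi

theorem exists_strategy_sum_eq_of_erase [Finite ι] [DecidableEq ι] {S : Finset ι} {E : Set ι}
    {α : ι → ℝ} (hα : ∀ j ∈ S, j ∉ E → 0 ≤ α j) {i : ι} (hi : α i ≠ 0) {α' : ι → ℝ}
    (hα' : ∀ j ∈ S.erase i, j ∉ E ∪ {j | α j ≠ 0} → 0 ≤ α' j) :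
    ∃ β : ι → ℝ, (∀ j ∈ S, j ∉ E → 0 ≤ β j) ∧
      ∀ z : ι → ℝ, ∑ j ∈ S, α j * z j = 0 → ∑ j ∈ S, β j * z j = ∑ j ∈ S.erase i, α' j * z j := by
  have hcond : ∀ j ∈ {j | j ∈ S ∧ j ∉ E},
      0 ≤ α j ∧ (0 < α j ∨ 0 ≤ Function.update α' i 0 j) := fun j ⟨hjS, hjE⟩ => by
    refine ⟨hα j hjS hjE, (hα j hjS hjE).lt_or_eq.imp_right fun hzero => ?_⟩
    have hji : j ≠ i := by rintro rfl; exact hi hzero.symm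
    rw [Function.update_of_ne hji]
    exact hα' j (Finset.mem_erase.2 ⟨hji, hjS⟩) (by simp [hjE, hzero])
  obtain ⟨t, ht⟩ := (eventually_forall_nonneg_add_mul hcond).exists
  refine ⟨Function.update α' i 0 + t • α,
    fun j hjS hjE => by simpa [mul_comm t] using ht j ⟨hjS, hjE⟩, fun z hz => ?_⟩
  simp only [Pi.add_apply, Pi.smul_apply, smul_eq_mul, add_mul, Finset.sum_add_distrib, mul_assoc,
    ← Finset.mul_sum, hz, mul_zero, add_zero]
  rw [← Finset.sum_erase (a := i) S (by simp)]
  exact Finset.sum_congr rfl fun j hj => by rw [Function.update_of_ne (Finset.ne_of_mem_erase hj)]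

theorem mem_feasibleMoments_of_erase [DecidableEq ι] {S : Finset ι} {E : Set ι} {α : ι → ℝ} {i : ι}
    (hi : α i ≠ 0) (hiS : i ∈ S) {v : ℝ × (ι → ℝ)}
    (hv : v ∈ feasibleMoments (S.erase i) (E ∪ {j | α j ≠ 0}))
    (hαv : ∑ j ∈ S, α j * v.2 j = 0) : v ∈ feasibleMoments S E := by
  have hvi : v.2 i = 0 := by
    rw [← Finset.add_sum_erase S _ hiS, Finset.sum_eq_zero fun j hj => ?_, add_zero] at hαv
    · exact (mul_eq_zero.1 hαv).resolve_left hi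
    · by_cases hαj : α j = 0
      · rw [hαj, zero_mul]
      · rw [(hv.2 j hj).2 (Or.inr hαj), mul_zero]
  refine ⟨hv.1, fun j hj => ?_⟩
  by_cases hji : j = i
  · subst hji
    simp [hvi]
  · have := hv.2 j (Finset.mem_erase.2 ⟨hji, hj⟩)
    exact ⟨this.1, fun hjE => this.2 (Or.inl hjE)⟩

theorem exists_mem_convexHull_feasibleMoments [Fintype ι] [DecidableEq ι]
    {Y : Set (ℝ × (ι → ℝ))} (S : Finset ι) (E : Set ι)
    (hNA : ∀ α : ι → ℝ, (∀ j ∈ S, j ∉ E → 0 ≤ α j) → (∀ y ∈ Y, 0 ≤ ∑ j ∈ S, α j * y.2 j) →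
      ∀ y ∈ Y, ∑ j ∈ S, α j * y.2 j = 0)
    (hH : ∀ α : ι → ℝ, (∀ j ∈ S, j ∉ E → 0 ≤ α j) → ∃ y ∈ Y, ∑ j ∈ S, α j * y.2 j < y.1) :
    ∃ v ∈ convexHull ℝ Y, v ∈ feasibleMoments S E := by
  induction S using Finset.strongInduction generalizing E with
  | H S ih =>
  obtain ⟨y₀, hy₀, -⟩ := hH 0 fun _ _ _ => le_rfl
  by_contra hno
  obtain ⟨β, α, hβ, hα, hne, hsep⟩ := exists_strategy_of_disjoint_feasibleMoments ⟨y₀, hy₀⟩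
    (Set.disjoint_left.2 fun v hv hvT => hno ⟨v, hv, hvT⟩)
  rcases hβ.lt_or_eq with hβpos | hβ0
  · obtain ⟨y, hy, hlt⟩ := hH (β⁻¹ • α) fun j hj hjE => smul_nonneg (inv_nonneg.2 hβ) (hα j hj hjE)
    simp only [Pi.smul_apply, smul_eq_mul, mul_assoc, ← Finset.mul_sum] at hlt
    rw [inv_mul_lt_iff₀ hβpos] at hlt
    linarith [hsep y hy]
  -- A degenerate separating direction is a null strategy: it lets us drop one asset.
  obtain ⟨i, hiS, hi⟩ := hne.resolve_left hβ0.not_lt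
  have hnull : ∀ y ∈ Y, ∑ j ∈ S, α j * y.2 j = 0 :=
    hNA α hα fun y hy => by simpa [← hβ0] using hsep y hy
  have hshift := fun α' hα' => exists_strategy_sum_eq_of_erase (α' := α') hα hi hα'
  obtain ⟨v, hv, hvT⟩ := ih (S.erase i) (Finset.erase_ssubset hiS) (E ∪ {j | α j ≠ 0})
    (fun α' hα' hpos y hy => by
      obtain ⟨β', hβ', heq⟩ := hshift α' hα'
      rw [← heq _ (hnull y hy)]
      exact hNA β' hβ' (fun y hy => (heq _ (hnull y hy)).symm ▸ hpos y hy) y hy)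
    (fun α' hα' => by
      obtain ⟨β', hβ', heq⟩ := hshift α' hα'
      obtain ⟨y, hy, hlt⟩ := hH β' hβ'
      exact ⟨y, hy, heq _ (hnull y hy) ▸ hlt⟩)
  refine hno ⟨v, hv, mem_feasibleMoments_of_erase hi hiS hvT ?_⟩
  refine convexHull_min hnull (convex_hyperplane ⟨fun x y => ?_, fun c x => ?_⟩ 0) hv
  · simp [mul_add, Finset.sum_add_distrib]
  · simp [Finset.mul_sum, mul_left_comm]

theorem exists_isProbabilityMeasure_integral_eq_sum {Ω κ : Type*} [MeasurableSpace Ω] [Fintype κ]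
    (pts : κ → Ω) {wt : κ → ℝ} (hwt0 : ∀ k, 0 ≤ wt k) (hwt1 : ∑ k, wt k = 1) :
    ∃ π : Measure Ω, IsProbabilityMeasure π ∧ ∀ u : Ω → ℝ, Measurable u →
      Integrable u π ∧ ∫ ω, u ω ∂π = ∑ k, wt k * u (pts k) := by
  refine ⟨∑ k, ENNReal.ofReal (wt k) • Measure.dirac (pts k), ⟨?_⟩, fun u hu => ?_⟩
  · simp only [Measure.coe_finsetSum, Finset.sum_apply, Measure.smul_apply, measure_univ,
      smul_eq_mul, mul_one]
    rw [← ENNReal.ofReal_sum_of_nonneg fun k _ => hwt0 k, hwt1, ENNReal.ofReal_one]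
  have hint : ∀ k ∈ Finset.univ, Integrable u (ENNReal.ofReal (wt k) • Measure.dirac (pts k)) :=
    fun k _ => (integrable_dirac' hu.stronglyMeasurable enorm_lt_top).smul_measure
      ENNReal.ofReal_ne_top
  refine ⟨integrable_finsetSum_measure.2 hint, ?_⟩
  rw [integral_finsetSum_measure hint]
  refine Finset.sum_congr rfl fun k _ => ?_
  rw [integral_smul_measure, integral_dirac' _ _ hu.stronglyMeasurable,
    ENNReal.toReal_ofReal (hwt0 k), smul_eq_mul]

theorem exists_isProbabilityMeasure_of_mem_convexHull {Ω V : Type*} [MeasurableSpace Ω]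
    [AddCommGroup V] [Module ℝ V] (Φ : Ω → V) {v : V} (hv : v ∈ convexHull ℝ (range Φ)) :
    ∃ π : Measure Ω, IsProbabilityMeasure π ∧ ∀ ℓ : V →ₗ[ℝ] ℝ, Measurable (fun ω => ℓ (Φ ω)) →
      Integrable (fun ω => ℓ (Φ ω)) π ∧ ∫ ω, ℓ (Φ ω) ∂π = ℓ v := by
  obtain ⟨κ, _, wt, z, hwt0, hwt1, hz, rfl⟩ := mem_convexHull_iff_exists_fintype.1 hv
  choose pts hpts using hz
  obtain ⟨π, hπ, hint⟩ := exists_isProbabilityMeasure_integral_eq_sum pts hwt0 hwt1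
  refine ⟨π, hπ, fun ℓ hℓ => ⟨(hint _ hℓ).1, ?_⟩⟩
  simp [(hint _ hℓ).2, hpts]

section Superhedging

variable {Ω : Type*} [Fintype ι] (w : ι → Ω → ℝ) (f : Ω → ℝ)

def superhedges (x : ℝ) : Set (ι → ℝ) :=
  {α | (∀ i, 0 ≤ α i) ∧ ∀ ω, f ω ≤ x + ∑ i, α i * w i ω}

def superhedgingPrices : Set ℝ := {x | (superhedges w f x).Nonempty}

def NoArbitrage : Prop :=
  ∀ α : ι → ℝ, (∀ i, 0 ≤ α i) → (∀ ω, 0 ≤ ∑ i, α i * w i ω) → ∀ ω, ∑ i, α i * w i ω = 0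

variable {w f}

theorem integral_le_of_mem_superhedgingPrices [MeasurableSpace Ω] {π : Measure Ω}
    [IsProbabilityMeasure π] (hwπ : ∀ i, Integrable (w i) π) (hw0 : ∀ i, ∫ ω, w i ω ∂π ≤ 0)
    (hf : Integrable f π) {x : ℝ} (hx : x ∈ superhedgingPrices w f) : ∫ ω, f ω ∂π ≤ x := by
  obtain ⟨α, hα0, hα⟩ := hx
  have hgain : Integrable (fun ω => ∑ i, α i * w i ω) π :=
    integrable_finsetSum _ fun i _ => (hwπ i).const_mul (α i)
  calc ∫ ω, f ω ∂π ≤ ∫ ω, x + ∑ i, α i * w i ω ∂π :=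
        integral_mono hf ((integrable_const x).add hgain) hα
    _ = x + ∑ i, α i * ∫ ω, w i ω ∂π := by
        rw [integral_add (integrable_const x) hgain, integral_const, integral_finsetSum _
          fun i _ => (hwπ i).const_mul (α i)]
        simp [integral_const_mul]
    _ ≤ x := add_le_of_nonpos_right
        (Finset.sum_nonpos fun i _ => mul_nonpos_of_nonneg_of_nonpos (hα0 i) (hw0 i))

theorem exists_integral_ge_of_notMem_superhedgingPrices [MeasurableSpace Ω]
    (hw : ∀ i, Measurable (w i)) (hNA : NoArbitrage w) (hf : Measurable f) {x : ℝ} (hx : x ∉ superhedgingPrices w f) :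
    ∃ π : Measure Ω, IsProbabilityMeasure π ∧
      ((∀ i, Integrable (w i) π) ∧ ∀ i, ∫ ω, w i ω ∂π ≤ 0) ∧ x ≤ ∫ ω, f ω ∂π := by
  classical
  set Φ : Ω → ℝ × (ι → ℝ) := fun ω => (f ω - x, fun j => w j ω)
  obtain ⟨v, hv, hv0, hvw⟩ := exists_mem_convexHull_feasibleMoments (Y := range Φ) Finset.univ ∅
    (fun α hα hpos => forall_mem_range.2 <| hNA α (fun j => hα j (Finset.mem_univ j) id)
      fun ω => hpos _ (mem_range_self ω))
    (fun α hα => by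
      obtain ⟨ω, hω⟩ : ∃ ω, x + ∑ j, α j * w j ω < f ω := by
        by_contra! h
        exact hx ⟨α, fun j => hα j (Finset.mem_univ j) id, h⟩
      exact ⟨Φ ω, mem_range_self ω, by simp only [Φ]; linarith⟩)
  obtain ⟨π, hπ, hint⟩ := exists_isProbabilityMeasure_of_mem_convexHull Φ hv
  have hwj : ∀ j, Integrable (w j) π ∧ ∫ ω, w j ω ∂π = v.2 j := fun j =>
    hint ((LinearMap.proj j).comp (LinearMap.snd ℝ ℝ (ι → ℝ))) (hw j)
  obtain ⟨hgint, hg⟩ := hint (LinearMap.fst ℝ ℝ (ι → ℝ)) (hf.sub_const x)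
  have hfint : Integrable f π := by
    simpa [Φ] using (integrable_add_const_iff (c := x)).2 hgint
  refine ⟨π, hπ, ⟨fun j => (hwj j).1, fun j => (hwj j).2 ▸ (hvw j (Finset.mem_univ j)).1⟩, ?_⟩
  simp only [LinearMap.fst_apply, Φ] at hg
  rw [integral_sub hfint (integrable_const x), integral_const, probReal_univ, one_smul] at hg
  linarith

theorem isClosed_superhedgeGraph : IsClosed {q : ℝ × (ι → ℝ) | q.2 ∈ superhedges w f q.1} := by
  have : {q : ℝ × (ι → ℝ) | q.2 ∈ superhedges w f q.1} =
      (⋂ i, {q | 0 ≤ q.2 i}) ∩ ⋂ ω, {q | f ω ≤ q.1 + ∑ i, q.2 i * w i ω} := by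
    ext; simp [superhedges]
  rw [this]
  exact (isClosed_iInter fun i => isClosed_le continuous_const (by fun_prop)).inter
    (isClosed_iInter fun ω => isClosed_le continuous_const (by fun_prop))

theorem pi_norm_le_sum_of_nonneg {α : ι → ℝ} (hα : ∀ i, 0 ≤ α i) : ‖α‖ ≤ ∑ i, α i :=
  (pi_norm_le_iff_of_nonneg (Finset.sum_nonneg fun i _ => hα i)).2 fun i => by
    rw [Real.norm_of_nonneg (hα i)]
    exact Finset.single_le_sum (fun j _ => hα j) (Finset.mem_univ i)

theorem exists_isMinOn_sum_superhedges {x : ℝ} (h : (superhedges w f x).Nonempty) :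
    ∃ α ∈ superhedges w f x, IsMinOn (fun α => ∑ i, α i) (superhedges w f x) α := by
  obtain ⟨α₀, hα₀⟩ := h
  refine ContinuousOn.exists_isMinOn' (by fun_prop)
    (isClosed_superhedgeGraph.preimage (Continuous.prodMk continuous_const continuous_id)) hα₀ ?_
  refine eventually_inf_principal.2 ?_
  filter_upwards [tendsto_norm_cocompact_atTop.eventually_ge_atTop (∑ i, α₀ i)] with α hα hαs
    using hα.trans (pi_norm_le_sum_of_nonneg hαs.1)

theorem exists_eq_zero_of_isMinOn_sum {x : ℝ} {α : ι → ℝ} (hα : α ∈ superhedges w f x)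
    (hmin : IsMinOn (fun α => ∑ i, α i) (superhedges w f x) α) {β : ι → ℝ} (hβ : 0 < β)
    (hβw : ∀ ω, ∑ i, β i * w i ω = 0) : ∃ i, 0 < β i ∧ α i = 0 := by
  by_contra! h
  -- Otherwise `α - t⁻¹ • β` is a cheaper superhedge for large `t`.
  obtain ⟨t, ht, htpos⟩ := ((eventually_forall_nonneg_add_mul (s := univ) (a := -β) (b := α)
    fun i _ => ⟨hα.1 i, (hα.1 i).lt_or_eq.imp_right fun h0 =>
      neg_nonneg.2 (not_lt.1 fun hβi => h i hβi h0.symm)⟩).and (eventually_gt_atTop 0)).exists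
  have hcheaper : α - t⁻¹ • β ∈ superhedges w f x := by
    refine ⟨fun i => ?_, fun ω => ?_⟩
    · have := ht i (mem_univ i)
      simp only [Pi.sub_apply, Pi.smul_apply, smul_eq_mul, Pi.neg_apply] at this ⊢
      rw [sub_nonneg, inv_mul_le_iff₀ htpos]
      linarith
    · simpa [sub_mul, Finset.sum_sub_distrib, mul_assoc, ← Finset.mul_sum, hβw] using hα.2 ω
  have := hmin hcheaper
  simp only [mem_ofPred_eq, Pi.sub_apply, Pi.smul_apply, smul_eq_mul, Finset.sum_sub_distrib,
    ← Finset.mul_sum] at this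
  linarith [mul_pos (inv_pos.2 htpos) (Fintype.sum_pos hβ)]

theorem not_tendsto_norm_atTop_of_isMinOn (hNA : NoArbitrage w)
    {x : ℕ → ℝ} {p : ℝ} (hx : Tendsto x atTop (𝓝 p)) {α : ℕ → ι → ℝ}
    (hα : ∀ k, α k ∈ superhedges w f (x k))
    (hmin : ∀ k, IsMinOn (fun α => ∑ i, α i) (superhedges w f (x k)) (α k)) :
    ¬ Tendsto (fun k => ‖α k‖) atTop atTop := by
  intro hnorm
  set u : ℕ → ι → ℝ := fun k => ‖α k‖⁻¹ • α k
  have hu : ∀ᶠ k in atTop, ‖u k‖ = 1 := (hnorm.eventually_gt_atTop 0).mono fun k hk => by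
    simp [u, norm_smul, hk.ne']
  obtain ⟨β, -, φ, hφ, hβ⟩ := tendsto_subseq_of_frequently_bounded (x := u)
    (Metric.isBounded_closedBall (x := 0) (r := 1)) (hu.mono fun k hk => by simp [hk]).frequently
  have hβ1 : ‖β‖ = 1 := tendsto_nhds_unique hβ.norm
    (tendsto_const_nhds.congr' ((hφ.tendsto_atTop.eventually hu).mono fun k hk => hk.symm))
  have hβ0 : ∀ i, 0 ≤ β i := fun i => ge_of_tendsto (((continuous_apply i).tendsto β).comp hβ)
    (Eventually.of_forall fun k => mul_nonneg (inv_nonneg.2 (norm_nonneg _)) ((hα _).1 i))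
  -- The limit direction hedges `0`, since `f ≤ x + α·w` rescales to `‖α‖⁻¹ (f - x) ≤ u·w`.
  have hβw : ∀ ω, 0 ≤ ∑ i, β i * w i ω := fun ω => by
    refine le_of_tendsto_of_tendsto (f := fun k => ‖α (φ k)‖⁻¹ * (f ω - x (φ k))) ?_
      (((by fun_prop : Continuous fun b : ι → ℝ => ∑ i, b i * w i ω).tendsto β).comp hβ)
      (Eventually.of_forall fun k => ?_)
    · simpa using ((hnorm.comp hφ.tendsto_atTop).inv_tendsto_atTop).mul
        (tendsto_const_nhds.sub (hx.comp hφ.tendsto_atTop))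
    · have := mul_le_mul_of_nonneg_left (sub_le_iff_le_add'.2 ((hα (φ k)).2 ω))
        (inv_nonneg.2 (norm_nonneg (α (φ k))))
      simpa [u, Finset.mul_sum, mul_assoc] using this
  have hβpos : 0 < β := lt_of_le_of_ne hβ0 (by rintro rfl; simp at hβ1)
  have hpos : ∀ᶠ k in atTop, ∀ i, 0 < β i → 0 < u (φ k) i := eventually_all.2 fun i => by
    by_cases hi : 0 < β i
    · exact ((((continuous_apply i).tendsto β).comp hβ).eventually (lt_mem_nhds hi)).mono
        fun k hk _ => hk
    · exact Eventually.of_forall fun k h => absurd h hi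
  obtain ⟨k, hk⟩ := hpos.exists
  obtain ⟨i, hi, hαi⟩ := exists_eq_zero_of_isMinOn_sum (hα (φ k)) (hmin (φ k)) hβpos
    (hNA β hβ0 hβw)
  simpa [u, hαi] using hk i hi

theorem isClosed_superhedgingPrices (hNA : NoArbitrage w) :
    IsClosed (superhedgingPrices w f) := by
  refine IsSeqClosed.isClosed fun x p hxP hx => ?_
  choose α hα hmin using fun k => exists_isMinOn_sum_superhedges (hxP k)
  by_cases hbdd : ∃ R, ∃ᶠ k in atTop, α k ∈ Metric.closedBall 0 R
  · obtain ⟨R, hR⟩ := hbdd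
    obtain ⟨β, -, φ, hφ, hβ⟩ := tendsto_subseq_of_frequently_bounded Metric.isBounded_closedBall hR
    exact ⟨β, isClosed_superhedgeGraph.mem_of_tendsto
      ((hx.comp hφ.tendsto_atTop).prodMk_nhds hβ) (Eventually.of_forall fun k => hα (φ k))⟩
  · refine absurd (tendsto_atTop.2 fun R => ?_) (not_tendsto_norm_atTop_of_isMinOn hNA hx hα hmin)
    push Not at hbdd
    filter_upwards [hbdd R] with k hk
    rw [mem_closedBall_zero_iff, not_le] at hk
    exact hk.le

end Superhedging

end

/-- Auxiliary finite-dimensional duality (Lemma on the space of measurable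
functions): under the no-arbitrage-type condition on `w`, the supremum of `∫ f dπ`
over the "supermartingale measures" `Π` equals the cheapest superhedging constant
using the payoffs `w`, and the infimum is attained whenever it is finite. -/
theorem abstract_superhedging_duality {Ω : Type*} [MeasurableSpace Ω] (n : ℕ)
    (w : Fin n → Ω → ℝ) (hw : ∀ i, Measurable (w i))
    (hNA : ∀ α : Fin n → ℝ, (∀ i, 0 ≤ α i) →
      (∀ ω, 0 ≤ ∑ i, α i * w i ω) → ∀ ω, ∑ i, α i * w i ω = 0)
    (f : Ω → ℝ) (hf : Measurable f)
    (hf_int : ∀ π : Measure Ω, IsProbabilityMeasure π →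
      ((∀ i, Integrable (w i) π) ∧ ∀ i, (∫ ω, w i ω ∂π) ≤ 0) → Integrable f π) :
    (sSup {y : EReal | ∃ π : Measure Ω, IsProbabilityMeasure π ∧
        ((∀ i, Integrable (w i) π) ∧ ∀ i, (∫ ω, w i ω ∂π) ≤ 0) ∧
        y = ((∫ ω, f ω ∂π : ℝ) : EReal)}
      = sInf {y : EReal | ∃ x : ℝ, (∃ α : Fin n → ℝ, (∀ i, 0 ≤ α i) ∧
          ∀ ω, f ω ≤ x + ∑ i, α i * w i ω) ∧ y = (x : EReal)}) ∧
    (({x : ℝ | ∃ α : Fin n → ℝ, (∀ i, 0 ≤ α i) ∧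
        ∀ ω, f ω ≤ x + ∑ i, α i * w i ω}.Nonempty →
      BddBelow {x : ℝ | ∃ α : Fin n → ℝ, (∀ i, 0 ≤ α i) ∧
        ∀ ω, f ω ≤ x + ∑ i, α i * w i ω} →
      sInf {x : ℝ | ∃ α : Fin n → ℝ, (∀ i, 0 ≤ α i) ∧
        ∀ ω, f ω ≤ x + ∑ i, α i * w i ω}
        ∈ {x : ℝ | ∃ α : Fin n → ℝ, (∀ i, 0 ≤ α i) ∧
        ∀ ω, f ω ≤ x + ∑ i, α i * w i ω})) := by
  refine ⟨le_antisymm ?_ ?_, (isClosed_superhedgingPrices hNA).csInf_mem⟩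
  · refine sSup_le fun _ ⟨π, hπ, hπw, hy⟩ => le_sInf fun _ ⟨x, hx, hz⟩ => ?_
    rw [hy, hz, EReal.coe_le_coe_iff]
    exact integral_le_of_mem_superhedgingPrices hπw.1 hπw.2 (hf_int π hπ hπw) hx
  · refine EReal.le_of_forall_lt_iff_le.1 fun x hx => sInf_le ⟨x, ?_, rfl⟩
    by_contra hxP
    obtain ⟨π, hπ, hπw, hxπ⟩ := exists_integral_ge_of_notMem_superhedgingPrices hw hNA hf hxP
    refine hx.not_ge ((EReal.coe_le_coe_iff.2 hxπ).trans (le_sSup ?_))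
    exact ⟨π, hπ, hπw, rfl⟩
end

section
/- P_sub = 0 if and only if μ₁ = μ₂. -/
open MeasureTheory Set Filter

noncomputable section

/-- A subreplicating portfolio for the VIX future. -/
structure IsSubRep (τ : ℝ) (μ₁ μ₂ : Measure ℝ) (u₁ u₂ : ℝ → ℝ)
    (ΔS ΔL : ℝ → ℝ → ℝ) : Prop where
  meas_u₁ : Measurable u₁
  meas_u₂ : Measurable u₂
  meas_ΔS : Measurable (Function.uncurry ΔS)
  meas_ΔL : Measurable (Function.uncurry ΔL)
  int_u₁ : Integrable u₁ μ₁
  int_u₂ : Integrable u₂ μ₂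
  hedge : ∀ s₁ s₂ v : ℝ, 0 < s₁ → 0 < s₂ → 0 ≤ v →
    u₁ s₁ + u₂ s₂ + ΔS s₁ v * (s₂ - s₁) + ΔL s₁ v * (Lf τ (s₂ / s₁) - v ^ 2) ≤ v

/-- `P_sub`: the supremum of subreplication prices, as an extended real. -/
def PsubE (τ : ℝ) (μ₁ μ₂ : Measure ℝ) : EReal :=
  sSup {y : EReal | ∃ u₁ u₂ ΔS ΔL, IsSubRep τ μ₁ μ₂ u₁ u₂ ΔS ΔL ∧
    y = (((∫ s, u₁ s ∂μ₁) + ∫ s, u₂ s ∂μ₂ : ℝ) : EReal)}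

/-!
If `P_sub = 0`, every subreplicating portfolio has nonpositive price. Selling `min(S₁, K)` and
buying `min(S₂, K)`, hedged with `-1_{S₁ < K}` units of stock, shows that the call prices
`Cᵢ(K) = Eⁱ[min(S, K)]` satisfy `C₂ ≤ C₁`. The log contract hedged with `τ/2` units of `L - v²`
gives `E²[ln S] ≤ E¹[ln S]`; conversely the truncated contracts `c·min(± ln S, N)` are
subreplicated by selling `cτ/2` units of `L - v²` while `v ≤ 2cN` (where `(cτ/2)v² ≤ v`) and
nothing otherwise (where `2cN < v`), and letting `N → ∞` gives `E¹[ln S] ≤ E²[ln S]`.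
Since `ln x = ∫₀^∞ (min(x, K) - min(1, K)) / K² dK`, the continuous function `C₁ - C₂ ≥ 0` has
zero integral against `dK / K²`, so it vanishes on `(0, ∞)`; and call prices determine a law on
`(0, ∞)`, whose tail `μ(S > K)` is their right derivative in `K`.
For `μ₁ = μ₂`, the hedging inequality at `s₁ = s₂`, `v = 0` bounds every price by `0`.
-/

open Topology

section CallPrice

variable {μ : Measure ℝ}

lemma abs_min_sub_min_le (s K K' : ℝ) : |min s K - min s K'| ≤ |K - K'| := by
  simpa using abs_min_sub_min_le_max s K s K'

lemma integrable_min_const [IsFiniteMeasure μ] (h : Integrable (fun s => s) μ) (K : ℝ) :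
    Integrable (fun s => min s K) μ :=
  h.inf (integrable_const K)

lemma lipschitzWith_integral_min [IsProbabilityMeasure μ] (h : Integrable (fun s => s) μ) :
    LipschitzWith 1 fun K => ∫ s, min s K ∂μ := by
  refine LipschitzWith.of_dist_le_mul fun K K' => ?_
  rw [NNReal.coe_one, one_mul, Real.dist_eq, Real.dist_eq,
    ← integral_sub (integrable_min_const h K) (integrable_min_const h K')]
  calc |∫ s, (min s K - min s K') ∂μ| ≤ ∫ s, |min s K - min s K'| ∂μ :=
        abs_integral_le_integral_abs
    _ ≤ ∫ _, |K - K'| ∂μ :=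
        integral_mono ((integrable_min_const h K).sub (integrable_min_const h K')).abs
          (integrable_const _) fun s => abs_min_sub_min_le s K K'
    _ = |K - K'| := by simp

lemma tendsto_slope_integral_min [IsFiniteMeasure μ] (h : Integrable (fun s => s) μ) (K : ℝ) :
    Tendsto (fun ε => ((∫ s, min s (K + ε) ∂μ) - ∫ s, min s K ∂μ) / ε) (𝓝[>] 0)
      (𝓝 (μ.real (Ioi K))) := by
  have hslope : ∀ ε, ((∫ s, min s (K + ε) ∂μ) - ∫ s, min s K ∂μ) / ε
      = ∫ s, (min s (K + ε) - min s K) / ε ∂μ := fun ε => by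
    rw [integral_div, integral_sub (integrable_min_const h _) (integrable_min_const h _)]
  simp_rw [hslope, ← integral_indicator_one measurableSet_Ioi]
  refine tendsto_integral_filter_of_dominated_convergence (fun _ => 1)
    (Eventually.of_forall fun ε => by fun_prop) ?_ (integrable_const 1) ?_
  · filter_upwards [self_mem_nhdsWithin] with ε (hε : 0 < ε)
    refine Eventually.of_forall fun s => ?_
    rw [Real.norm_eq_abs, abs_div, abs_of_pos hε, div_le_one hε]
    simpa [abs_of_pos hε] using abs_min_sub_min_le s (K + ε) K
  · refine Eventually.of_forall fun s => ?_
    rcases le_or_gt s K with hs | hs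
    · rw [indicator_of_notMem (notMem_Ioi.2 hs)]
      refine tendsto_const_nhds.congr' ?_
      filter_upwards [self_mem_nhdsWithin] with ε (hε : 0 < ε)
      rw [min_eq_left hs, min_eq_left (by linarith), sub_self, zero_div]
    · rw [indicator_of_mem (mem_Ioi.2 hs)]
      refine tendsto_const_nhds.congr' ?_
      filter_upwards [Ioo_mem_nhdsGT (sub_pos.2 hs)] with ε ⟨hε, hεs⟩
      rw [min_eq_right (by linarith), min_eq_right hs.le, add_sub_cancel_left, div_self hε.ne',
        Pi.one_apply]

lemma measure_Ioi_eq_one_of_nonpos [IsProbabilityMeasure μ] (hpos : ∀ᵐ s ∂μ, 0 < s) {K : ℝ}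
    (hK : K ≤ 0) : μ (Ioi K) = 1 :=
  (mem_ae_iff_prob_eq_one measurableSet_Ioi).1 (hpos.mono fun _ hs => hK.trans_lt hs)

lemma ext_of_integral_min {μ₁ μ₂ : Measure ℝ} [IsProbabilityMeasure μ₁] [IsProbabilityMeasure μ₂]
    (hpos₁ : ∀ᵐ s ∂μ₁, 0 < s) (hpos₂ : ∀ᵐ s ∂μ₂, 0 < s)
    (h₁ : Integrable (fun s => s) μ₁) (h₂ : Integrable (fun s => s) μ₂)
    (h : ∀ K, 0 < K → ∫ s, min s K ∂μ₁ = ∫ s, min s K ∂μ₂) : μ₁ = μ₂ := by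
  have htail : ∀ K, μ₁ (Ioi K) = μ₂ (Ioi K) := by
    intro K
    rcases le_or_gt K 0 with hK | hK
    · rw [measure_Ioi_eq_one_of_nonpos hpos₁ hK, measure_Ioi_eq_one_of_nonpos hpos₂ hK]
    refine (measureReal_eq_measureReal_iff).1 (tendsto_nhds_unique
      (tendsto_slope_integral_min h₁ K) ((tendsto_slope_integral_min h₂ K).congr' ?_))
    filter_upwards [self_mem_nhdsWithin] with ε (hε : 0 < ε)
    rw [h K hK, h (K + ε) (by positivity)]
  refine Measure.ext_of_Iic μ₁ μ₂ fun a => ?_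
  rw [← compl_Ioi, prob_compl_eq_one_sub measurableSet_Ioi, prob_compl_eq_one_sub measurableSet_Ioi,
    htail]

end CallPrice

section LogRepresentation

variable {a b : ℝ}

lemma integral_Ioc_sub_div_sq (ha : 0 < a) (hab : a ≤ b) :
    IntegrableOn (fun K => (K - a) / K ^ 2) (Ioc a b) ∧
      ∫ K in Ioc a b, (K - a) / K ^ 2 = Real.log b + a / b - (Real.log a + 1) := by
  have hcont : ContinuousOn (fun K => (K - a) / K ^ 2) (Icc a b) :=
    ContinuousOn.div (by fun_prop) (by fun_prop) fun K hK => by nlinarith [hK.1]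
  have hderiv : ∀ K ∈ uIcc a b, HasDerivAt (fun K => Real.log K + a / K) ((K - a) / K ^ 2) K := by
    intro K hK
    rw [uIcc_of_le hab] at hK
    have hK0 : K ≠ 0 := (ha.trans_le hK.1).ne'
    have h : HasDerivAt (fun K => Real.log K + a * K⁻¹) (K⁻¹ + a * -(K ^ 2)⁻¹) K :=
      (Real.hasDerivAt_log hK0).add ((hasDerivAt_inv hK0).const_mul a)
    simpa only [div_eq_mul_inv] using h.congr_deriv (by field_simp; ring)
  refine ⟨hcont.integrableOn_Icc.mono_set Ioc_subset_Icc_self, ?_⟩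
  rw [← intervalIntegral.integral_of_le hab, intervalIntegral.integral_eq_sub_of_hasDerivAt hderiv
    ((uIcc_of_le hab).symm ▸ hcont).intervalIntegrable, div_self ha.ne']

lemma integral_Ioi_const_div_sq (hb : 0 < b) (c : ℝ) :
    IntegrableOn (fun K => c / K ^ 2) (Ioi b) ∧ ∫ K in Ioi b, c / K ^ 2 = c / b := by
  have hrpow : EqOn (fun K : ℝ => c * K ^ (-2 : ℝ)) (fun K => c / K ^ 2) (Ioi b) := fun K hK => by
    simp [Real.rpow_neg (hb.trans hK).le, div_eq_mul_inv]
  have hint : IntegrableOn (fun K : ℝ => c * K ^ (-2 : ℝ)) (Ioi b) :=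
    (integrableOn_Ioi_rpow_of_lt (by norm_num) hb).const_mul c
  refine ⟨hint.congr_fun hrpow measurableSet_Ioi, ?_⟩
  rw [← setIntegral_congr_fun measurableSet_Ioi hrpow, integral_const_mul,
    integral_Ioi_rpow_of_lt (by norm_num) hb]
  norm_num [Real.rpow_neg_one, div_eq_mul_inv]

lemma integral_min_sub_min_div_sq_of_le (ha : 0 < a) (hab : a ≤ b) :
    IntegrableOn (fun K => (min b K - min a K) / K ^ 2) (Ioi 0) ∧
      ∫ K in Ioi 0, (min b K - min a K) / K ^ 2 = Real.log b - Real.log a := by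
  have hb := ha.trans_le hab
  set f := fun K : ℝ => (min b K - min a K) / K ^ 2
  have e₁ : EqOn f 0 (Ioc 0 a) := fun K hK => by
    simp [f, min_eq_right hK.2, min_eq_right (hK.2.trans hab)]
  have e₂ : EqOn f (fun K => (K - a) / K ^ 2) (Ioc a b) := fun K hK => by
    simp [f, min_eq_right hK.2, min_eq_left hK.1.le]
  have e₃ : EqOn f (fun K => (b - a) / K ^ 2) (Ioi b) := fun K (hK : b < K) => by
    simp [f, min_eq_left hK.le, min_eq_left (hab.trans hK.le)]
  obtain ⟨i₂, v₂⟩ := integral_Ioc_sub_div_sq ha hab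
  obtain ⟨i₃, v₃⟩ := integral_Ioi_const_div_sq hb (b - a)
  have i₁ : IntegrableOn f (Ioc 0 a) := integrableOn_zero.congr_fun e₁.symm measurableSet_Ioc
  replace i₂ : IntegrableOn f (Ioc a b) := i₂.congr_fun e₂.symm measurableSet_Ioc
  replace i₃ : IntegrableOn f (Ioi b) := i₃.congr_fun e₃.symm measurableSet_Ioi
  have hsplit : Ioi (0 : ℝ) = Ioc 0 a ∪ (Ioc a b ∪ Ioi b) := by
    rw [Ioc_union_Ioi_eq_Ioi hab, Ioc_union_Ioi_eq_Ioi ha.le]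
  refine ⟨hsplit ▸ i₁.union (i₂.union i₃), ?_⟩
  rw [hsplit, setIntegral_union (Ioc_union_Ioi_eq_Ioi hab ▸ Ioc_disjoint_Ioi le_rfl)
      (measurableSet_Ioc.union measurableSet_Ioi) i₁ (i₂.union i₃),
    setIntegral_union (Ioc_disjoint_Ioi le_rfl) measurableSet_Ioi i₂ i₃,
    setIntegral_congr_fun measurableSet_Ioc e₁, setIntegral_congr_fun measurableSet_Ioc e₂,
    setIntegral_congr_fun measurableSet_Ioi e₃, v₂, v₃, Pi.zero_def, integral_zero]
  field_simp
  ring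

lemma integral_min_sub_min_div_sq (ha : 0 < a) (hb : 0 < b) :
    IntegrableOn (fun K => (min b K - min a K) / K ^ 2) (Ioi 0) ∧
      ∫ K in Ioi 0, (min b K - min a K) / K ^ 2 = Real.log b - Real.log a := by
  wlog hab : a ≤ b generalizing a b
  · obtain ⟨hint, hval⟩ := this hb ha (le_of_not_ge hab)
    have hneg : (fun K => (min b K - min a K) / K ^ 2)
        = fun K => -((min a K - min b K) / K ^ 2) := by
      funext K; ring
    rw [hneg, integral_neg, hval, neg_sub]
    exact ⟨hint.neg, rfl⟩
  exact integral_min_sub_min_div_sq_of_le ha hab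

lemma abs_min_sub_min_eq (a b K : ℝ) :
    |min b K - min a K| = min (max a b) K - min (min a b) K := by
  rcases le_total a b with h | h
  · rw [max_eq_right h, min_eq_left h, abs_of_nonneg (sub_nonneg.2 (min_le_min_right K h))]
  · rw [max_eq_left h, min_eq_right h, abs_of_nonpos (sub_nonpos.2 (min_le_min_right K h)), neg_sub]

lemma integral_norm_min_sub_min_div_sq (ha : 0 < a) (hb : 0 < b) :
    ∫ K in Ioi 0, ‖(min b K - min a K) / K ^ 2‖ = |Real.log b - Real.log a| := by
  simp_rw [Real.norm_eq_abs, abs_div, abs_min_sub_min_eq, abs_sq]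
  rw [(integral_min_sub_min_div_sq (lt_min ha hb) (lt_max_of_lt_left ha)).2]
  rcases le_total a b with h | h
  · rw [max_eq_right h, min_eq_left h, abs_of_nonneg (sub_nonneg.2 (Real.log_le_log ha h))]
  · rw [max_eq_left h, min_eq_right h, abs_of_nonpos (sub_nonpos.2 (Real.log_le_log hb h)), neg_sub]

end LogRepresentation

lemma integral_log_eq_setIntegral_min {μ : Measure ℝ} [IsProbabilityMeasure μ]
    (hpos : ∀ᵐ x ∂μ, 0 < x) (hid : Integrable (fun x => x) μ) (hlog : Integrable Real.log μ) :
    IntegrableOn (fun K => ((∫ x, min x K ∂μ) - min 1 K) / K ^ 2) (Ioi 0) ∧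
      ∫ K in Ioi 0, ((∫ x, min x K ∂μ) - min 1 K) / K ^ 2 = ∫ x, Real.log x ∂μ := by
  set f : ℝ → ℝ → ℝ := fun x K => (min x K - min 1 K) / K ^ 2
  have hinner : ∀ K, ∫ x, f x K ∂μ = ((∫ x, min x K ∂μ) - min 1 K) / K ^ 2 := fun K => by
    simp [f, integral_div, integral_sub (integrable_min_const hid K) (integrable_const _)]
  have hf : Integrable (Function.uncurry f) (μ.prod (volume.restrict (Ioi 0))) := by
    refine (integrable_prod_iff (by fun_prop)).2 ⟨?_, ?_⟩
    · filter_upwards [hpos] with x hx using (integral_min_sub_min_div_sq one_pos hx).1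
    · refine hlog.abs.congr ?_
      filter_upwards [hpos] with x hx
      simpa [f] using (integral_norm_min_sub_min_div_sq one_pos hx).symm
  simp_rw [← hinner]
  refine ⟨hf.integral_prod_right, ?_⟩
  rw [← integral_integral_swap hf]
  refine integral_congr_ae ?_
  filter_upwards [hpos] with x hx
  simp [f, (integral_min_sub_min_div_sq one_pos hx).2]

namespace IsMarginal

variable {S₀ : ℝ} {μ : Measure ℝ}

lemma ae_pos_s11 (h : IsMarginal S₀ μ) : ∀ᵐ s ∂μ, 0 < s :=
  measure_eq_zero_iff_ae_notMem.1 h.conc |>.mono fun _ hs => not_not.1 hs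

lemma integrable_log_s11 (h : IsMarginal S₀ μ) : Integrable Real.log μ :=
  (integrable_norm_iff (by fun_prop)).1 h.int_log

end IsMarginal

lemma integral_min_eq_of_le_of_integral_log_eq {S₁ S₂ : ℝ} {μ₁ μ₂ : Measure ℝ}
    (h₁ : IsMarginal S₁ μ₁) (h₂ : IsMarginal S₂ μ₂)
    (hcall : ∀ K, ∫ s, min s K ∂μ₂ ≤ ∫ s, min s K ∂μ₁)
    (hlog : ∫ s, Real.log s ∂μ₁ = ∫ s, Real.log s ∂μ₂) {K : ℝ} (hK : 0 < K) :
    ∫ s, min s K ∂μ₁ = ∫ s, min s K ∂μ₂ := by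
  have := h₁.prob; have := h₂.prob
  set D := fun K => (∫ s, min s K ∂μ₁) - ∫ s, min s K ∂μ₂
  obtain ⟨i₁, v₁⟩ := integral_log_eq_setIntegral_min h₁.ae_pos_s11 h₁.int_id h₁.integrable_log_s11
  obtain ⟨i₂, v₂⟩ := integral_log_eq_setIntegral_min h₂.ae_pos_s11 h₂.int_id h₂.integrable_log_s11
  have hD : ∀ K, D K / K ^ 2 = ((∫ s, min s K ∂μ₁) - min 1 K) / K ^ 2
      - ((∫ s, min s K ∂μ₂) - min 1 K) / K ^ 2 := fun K => by ring
  have hint : IntegrableOn (fun K => D K / K ^ 2) (Ioi 0) := by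
    simp_rw [hD]; exact i₁.sub i₂
  have hzero : ∫ K in Ioi 0, D K / K ^ 2 = 0 := by
    simp_rw [hD]
    rw [integral_sub i₁ i₂, v₁, v₂, hlog, sub_self]
  have hnonneg : 0 ≤ᵐ[volume.restrict (Ioi 0)] fun K => D K / K ^ 2 :=
    Eventually.of_forall fun K => div_nonneg (sub_nonneg.2 (hcall K)) (sq_nonneg K)
  have hcont : ContinuousOn (fun K => D K / K ^ 2) (Ioi 0) :=
    (((lipschitzWith_integral_min h₁.int_id).continuous.sub
      (lipschitzWith_integral_min h₂.int_id).continuous).continuousOn).div (by fun_prop)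
      fun K (hK : 0 < K) => by positivity
  have hDK := Measure.eqOn_open_of_ae_eq
    ((setIntegral_eq_zero_iff_of_nonneg_ae hnonneg hint).1 hzero) isOpen_Ioi hcont
    continuousOn_const hK
  simpa [D, hK.ne', sub_eq_zero] using hDK

lemma tendsto_integral_min_atTop {α : Type*} [MeasurableSpace α] {μ : Measure α} {g : α → ℝ}
    (hg : Integrable g μ) : Tendsto (fun N => ∫ a, min (g a) N ∂μ) atTop (𝓝 (∫ a, g a ∂μ)) := by
  refine tendsto_integral_filter_of_dominated_convergence (fun a => |g a|)
    (Eventually.of_forall fun N => hg.aestronglyMeasurable.inf aestronglyMeasurable_const) ?_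
    hg.abs (Eventually.of_forall fun a => tendsto_const_nhds.congr' ?_)
  · filter_upwards [eventually_ge_atTop 0] with N hN
    refine Eventually.of_forall fun a => ?_
    rw [Real.norm_eq_abs, abs_le]
    constructor
    · exact le_min (neg_abs_le _) ((neg_nonpos.2 (abs_nonneg _)).trans hN)
    · exact (min_le_left _ _).trans (le_abs_self _)
  · filter_upwards [eventually_ge_atTop (g a)] with N hN
    rw [min_eq_left hN]

section Portfolios

variable {τ : ℝ} {μ₁ μ₂ : Measure ℝ}

lemma price_le_PsubE {u₁ u₂ : ℝ → ℝ} {ΔS ΔL : ℝ → ℝ → ℝ} (h : IsSubRep τ μ₁ μ₂ u₁ u₂ ΔS ΔL) :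
    (((∫ s, u₁ s ∂μ₁) + ∫ s, u₂ s ∂μ₂ : ℝ) : EReal) ≤ PsubE τ μ₁ μ₂ :=
  le_sSup ⟨u₁, u₂, ΔS, ΔL, h, rfl⟩

lemma price_nonpos_of_PsubE_nonpos (hP : PsubE τ μ₁ μ₂ ≤ 0) {u₁ u₂ : ℝ → ℝ}
    {ΔS ΔL : ℝ → ℝ → ℝ} (h : IsSubRep τ μ₁ μ₂ u₁ u₂ ΔS ΔL) :
    (∫ s, u₁ s ∂μ₁) + ∫ s, u₂ s ∂μ₂ ≤ 0 :=
  EReal.coe_nonpos.1 ((price_le_PsubE h).trans hP)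

lemma isSubRep_call [IsFiniteMeasure μ₁] [IsFiniteMeasure μ₂] (h₁ : Integrable (fun s => s) μ₁)
    (h₂ : Integrable (fun s => s) μ₂) (K : ℝ) :
    IsSubRep τ μ₁ μ₂ (fun s => -min s K) (fun s => min s K)
      (fun s _ => if s < K then -1 else 0) (fun _ _ => 0) where
  meas_u₁ := by fun_prop
  meas_u₂ := by fun_prop
  meas_ΔS := Measurable.ite (measurableSet_lt measurable_fst measurable_const)
    measurable_const measurable_const
  meas_ΔL := measurable_const
  int_u₁ := (integrable_min_const h₁ K).neg
  int_u₂ := integrable_min_const h₂ K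
  hedge s₁ s₂ v _ _ hv := by
    simp only [zero_mul, add_zero]
    split_ifs with h
    · linarith [min_eq_left h.le, min_le_left s₂ K]
    · linarith [min_eq_right (not_lt.1 h), min_le_right s₂ K]

lemma isSubRep_log (hτ : 0 < τ) (h₁ : Integrable Real.log μ₁) (h₂ : Integrable Real.log μ₂) :
    IsSubRep τ μ₁ μ₂ (fun s => -Real.log s) Real.log (fun _ _ => 0) (fun _ _ => τ / 2) where
  meas_u₁ := by fun_prop
  meas_u₂ := by fun_prop
  meas_ΔS := measurable_const
  meas_ΔL := measurable_const
  int_u₁ := h₁.neg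
  int_u₂ := h₂
  hedge s₁ s₂ v hs₁ hs₂ hv := by
    have hL : τ / 2 * Lf τ (s₂ / s₁) = Real.log s₁ - Real.log s₂ := by
      rw [Lf, Real.log_div hs₂.ne' hs₁.ne']
      field_simp
      ring
    nlinarith [sq_nonneg v]

lemma isSubRep_truncatedLog [IsFiniteMeasure μ₁] [IsFiniteMeasure μ₂] (hτ : 0 < τ)
    (h₁ : Integrable Real.log μ₁) (h₂ : Integrable Real.log μ₂) {c N : ℝ} (hc : 0 ≤ c)
    (hcN : c ^ 2 * τ * N ≤ 1) :
    IsSubRep τ μ₁ μ₂ (fun s => c * min (Real.log s) N) (fun s => c * min (-Real.log s) N)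
      (fun _ _ => 0) (fun _ v => if v ≤ 2 * c * N then -(c * τ / 2) else 0) where
  meas_u₁ := by fun_prop
  meas_u₂ := by fun_prop
  meas_ΔS := measurable_const
  meas_ΔL := Measurable.ite (measurableSet_le measurable_snd measurable_const)
    measurable_const measurable_const
  int_u₁ := (h₁.inf (integrable_const N)).const_mul c
  int_u₂ := (h₂.neg.inf (integrable_const N)).const_mul c
  hedge s₁ s₂ v hs₁ hs₂ hv := by
    have hL : c * τ / 2 * Lf τ (s₂ / s₁) = c * (Real.log s₁ - Real.log s₂) := by
      rw [Lf, Real.log_div hs₂.ne' hs₁.ne']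
      field_simp
      ring
    have hu₁ := mul_le_mul_of_nonneg_left (min_le_left (Real.log s₁) N) hc
    have hu₂ := mul_le_mul_of_nonneg_left (min_le_left (-Real.log s₂) N) hc
    have hN₁ := mul_le_mul_of_nonneg_left (min_le_right (Real.log s₁) N) hc
    have hN₂ := mul_le_mul_of_nonneg_left (min_le_right (-Real.log s₂) N) hc
    simp only [zero_mul, add_zero]
    split_ifs with hvN
    · nlinarith [mul_le_mul_of_nonneg_left hvN (by positivity : 0 ≤ c * τ * v)]
    · linarith

lemma integral_min_le_of_PsubE_nonpos [IsFiniteMeasure μ₁] [IsFiniteMeasure μ₂]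
    (h₁ : Integrable (fun s => s) μ₁) (h₂ : Integrable (fun s => s) μ₂)
    (hP : PsubE τ μ₁ μ₂ ≤ 0) (K : ℝ) : ∫ s, min s K ∂μ₂ ≤ ∫ s, min s K ∂μ₁ := by
  have := price_nonpos_of_PsubE_nonpos hP (isSubRep_call h₁ h₂ K)
  rw [integral_neg] at this
  linarith

lemma integral_log_le_of_PsubE_nonpos (hτ : 0 < τ) (h₁ : Integrable Real.log μ₁)
    (h₂ : Integrable Real.log μ₂) (hP : PsubE τ μ₁ μ₂ ≤ 0) :
    ∫ s, Real.log s ∂μ₂ ≤ ∫ s, Real.log s ∂μ₁ := by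
  have := price_nonpos_of_PsubE_nonpos hP (isSubRep_log hτ h₁ h₂)
  rw [integral_neg] at this
  linarith

lemma integral_min_log_add_integral_min_neg_log_nonpos [IsFiniteMeasure μ₁] [IsFiniteMeasure μ₂]
    (hτ : 0 < τ) (h₁ : Integrable Real.log μ₁) (h₂ : Integrable Real.log μ₂)
    (hP : PsubE τ μ₁ μ₂ ≤ 0) {N : ℝ} (hN : 0 ≤ N) :
    (∫ s, min (Real.log s) N ∂μ₁) + ∫ s, min (-Real.log s) N ∂μ₂ ≤ 0 := by
  set c := (τ * N + 1)⁻¹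
  have hc : 0 < c := by positivity
  have hcN : c ^ 2 * τ * N ≤ 1 := by
    rw [show c ^ 2 * τ * N = τ * N / (τ * N + 1) ^ 2 by simp [c]; ring,
      div_le_one (by positivity)]
    nlinarith
  have := price_nonpos_of_PsubE_nonpos hP (isSubRep_truncatedLog hτ h₁ h₂ hc.le hcN)
  rw [integral_const_mul, integral_const_mul, ← mul_add] at this
  exact nonpos_of_mul_nonpos_right this hc

lemma integral_log_eq_of_PsubE_nonpos {S₁ S₂ : ℝ} (hτ : 0 < τ) (h₁ : IsMarginal S₁ μ₁)
    (h₂ : IsMarginal S₂ μ₂) (hP : PsubE τ μ₁ μ₂ ≤ 0) :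
    ∫ s, Real.log s ∂μ₁ = ∫ s, Real.log s ∂μ₂ := by
  have := h₁.prob; have := h₂.prob
  refine le_antisymm ?_ (integral_log_le_of_PsubE_nonpos hτ h₁.integrable_log_s11 h₂.integrable_log_s11 hP)
  have hlim := (tendsto_integral_min_atTop h₁.integrable_log_s11).add
    (tendsto_integral_min_atTop h₂.integrable_log_s11.neg)
  have := le_of_tendsto hlim <| (eventually_ge_atTop 0).mono fun N hN =>
    integral_min_log_add_integral_min_neg_log_nonpos hτ h₁.integrable_log_s11 h₂.integrable_log_s11 hP hN
  rw [Pi.neg_def, integral_neg] at this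
  linarith

lemma PsubE_self_eq_zero {μ : Measure ℝ} (hpos : ∀ᵐ s ∂μ, 0 < s) : PsubE τ μ μ = 0 := by
  refine le_antisymm (sSup_le ?_) (le_sSup ?_)
  · rintro _ ⟨u₁, u₂, ΔS, ΔL, h, rfl⟩
    rw [← integral_add h.int_u₁ h.int_u₂]
    refine EReal.coe_nonpos.2 (integral_nonpos_of_ae ?_)
    filter_upwards [hpos] with s hs
    simpa [Lf] using h.hedge s s 0 hs hs le_rfl
  · refine ⟨0, 0, 0, 0, ⟨measurable_const, measurable_const, measurable_const, measurable_const,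
      integrable_zero _ _ _, integrable_zero _ _ _, fun _ _ v _ _ hv => by simpa using hv⟩, by simp⟩

end Portfolios

theorem Psub_eq_zero_iff_general (τ S₀ : ℝ) (hτ : 0 < τ)
    (μ₁ μ₂ : Measure ℝ) (h₁ : IsMarginal S₀ μ₁) (h₂ : IsMarginal S₀ μ₂) :
    PsubE τ μ₁ μ₂ = 0 ↔ μ₁ = μ₂ := by
  refine ⟨fun hP => ?_, fun h => h ▸ PsubE_self_eq_zero h₁.ae_pos_s11⟩
  have := h₁.prob; have := h₂.prob
  have hcall := integral_min_le_of_PsubE_nonpos h₁.int_id h₂.int_id hP.le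
  have hlog := integral_log_eq_of_PsubE_nonpos hτ h₁ h₂ hP.le
  exact ext_of_integral_min h₁.ae_pos_s11 h₂.ae_pos_s11 h₁.int_id h₂.int_id fun K hK =>
    integral_min_eq_of_le_of_integral_log_eq h₁ h₂ hcall hlog hK

/-- The classical lower bound is optimal iff the two smiles coincide:
`P_sub = 0 ↔ μ₁ = μ₂`. -/
theorem Psub_eq_zero_iff (τ S₀ : ℝ) (hτ : 0 < τ) (hS₀ : 0 < S₀)
    (μ₁ μ₂ : Measure ℝ) (h₁ : IsMarginal S₀ μ₁) (h₂ : IsMarginal S₀ μ₂) :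
    PsubE τ μ₁ μ₂ = 0 ↔ μ₁ = μ₂ :=
  Psub_eq_zero_iff_general τ S₀ hτ μ₁ μ₂ h₁ h₂
end
end

section
/- Let φ:(0,∞)×ℝ→ℝ be convex, and define u₁(s₁) = sup_{v≥0}{v − φ(s₁, L(s₁)+v²)} (valued in ℝ∪{+∞}), u₂(s₂) = φ(s₂, L(s₂)), Δ^S(s₁,v) = −∂₁,ᵣφ(s₁, L(s₁)+v²), Δ^L(s₁,v) = −∂₂,ᵣφ(s₁, L(s₁)+v²), where ∂ᵢ,ᵣφ denotes the right partial derivative in the i-th argument. Then for all s₁,s₂>0 and v≥0: u₁(s₁)+u₂(s₂)+Δ^S(s₁,v)(s₂−s₁)+Δ^L(s₁,v)(L(s₂/s₁)−v²) ≥ v. -/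
open MeasureTheory Set Filter

noncomputable section

section KeyAux

lemma exists_rightDeriv {S : Set ℝ} {f : ℝ → ℝ} (hf : ConvexOn ℝ S f) {x : ℝ}
    (hS : S ∈ nhds x) : ∃ g, HasDerivWithinAt f g (Ioi x) x := by
  have hx : x ∈ S := mem_of_mem_nhds hS
  obtain ⟨l, u, hxlu, hsub⟩ := mem_nhds_iff_exists_Ioo_subset.mp hS
  have hne : (Ioo x u).Nonempty := nonempty_Ioo.2 hxlu.2
  have hsub' : Ioo x u ⊆ S \ {x} := fun t ht =>
    ⟨hsub ⟨hxlu.1.trans ht.1, ht.2⟩, ht.1.ne'⟩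
  have hmono : MonotoneOn (slope f x) (Ioo x u) :=
    (hf.slope_mono hx).mono hsub'
  have hw : (l + x) / 2 ∈ S \ {x} := by
    constructor
    · exact hsub ⟨by linarith [hxlu.1], by linarith [hxlu.1, hxlu.2]⟩
    · simp only [mem_singleton_iff]
      intro h; nlinarith [hxlu.1]
  have hbdd : BddBelow (slope f x '' Ioo x u) := by
    refine ⟨slope f x ((l + x) / 2), ?_⟩
    rintro _ ⟨t, ht, rfl⟩
    exact (hf.slope_mono hx) hw (hsub' ht) (by linarith [hxlu.1, ht.1])
  refine ⟨sInf (slope f x '' Ioo x u), ?_⟩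
  rw [hasDerivWithinAt_iff_tendsto_slope' (notMem_Ioi_self)]
  exact MonotoneOn.tendsto_nhdsWithin_Ioo_right hne hmono hbdd

lemma rightDeriv_subgrad {S : Set ℝ} {f : ℝ → ℝ} (hf : ConvexOn ℝ S f) {x g : ℝ}
    (hS : S ∈ nhds x) (hg : HasDerivWithinAt f g (Ioi x) x) {y : ℝ} (hy : y ∈ S) :
    f x + g * (y - x) ≤ f y := by
  have hx : x ∈ S := mem_of_mem_nhds hS
  rcases lt_trichotomy x y with h | rfl | h
  · have h1 := hf.le_slope_of_hasDerivWithinAt_Ioi hx hy h hg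
    rw [slope_def_field, le_div_iff₀ (by linarith)] at h1
    linarith
  · simp
  · have htend := (hasDerivWithinAt_iff_tendsto_slope' (notMem_Ioi_self)).mp hg
    have hle : slope f x y ≤ g := by
      refine ge_of_tendsto htend ?_
      have hev : ∀ᶠ t in nhdsWithin x (Ioi x), t ∈ S :=
        eventually_nhdsWithin_of_eventually_nhds (eventually_mem_nhds_iff.mpr hS |>.mono
          fun t ht => mem_of_mem_nhds ht)
      filter_upwards [hev, self_mem_nhdsWithin] with t htS htx
      exact hf.slope_mono hx ⟨hy, h.ne⟩ ⟨htS, (mem_Ioi.1 htx).ne'⟩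
        (by linarith [mem_Ioi.1 htx])
    rw [slope_def_field, div_le_iff_of_neg (by linarith)] at hle
    linarith

lemma slope_tendsto_aux {f : ℝ → ℝ} {x g : ℝ}
    (hg : HasDerivWithinAt f g (Ioi x) x) {c : ℝ} (hc : 0 ≤ c) :
    Tendsto (fun ε : ℝ => (f (x + ε * c) - f x) / ε) (nhdsWithin 0 (Ioi 0))
      (nhds (c * g)) := by
  rcases hc.eq_or_lt with rfl | hc
  · simpa using (tendsto_const_nhds : Tendsto (fun _ : ℝ => (0:ℝ)) _ _)
  · have h₁ : Tendsto (fun ε : ℝ => x + ε * c) (nhdsWithin 0 (Ioi 0))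
        (nhdsWithin x (Ioi x)) := by
      apply tendsto_nhdsWithin_of_tendsto_nhds_of_eventually_within
      · have : Tendsto (fun ε : ℝ => x + ε * c) (nhds 0) (nhds (x + 0 * c)) :=
          (continuous_const.add (continuous_id.mul continuous_const)).tendsto 0
        simpa using this.mono_left nhdsWithin_le_nhds
      · filter_upwards [self_mem_nhdsWithin] with ε hε
        have : (0:ℝ) < ε := hε
        exact mem_Ioi.2 (by nlinarith)
    have h₂ := (hasDerivWithinAt_iff_tendsto_slope' (notMem_Ioi_self)).mp hg
    have h₃ := (h₂.comp h₁).const_mul c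
    refine Tendsto.congr' ?_ h₃
    filter_upwards [self_mem_nhdsWithin] with ε hε
    have hε' : (0:ℝ) < ε := hε
    simp only [Function.comp, slope_def_field]
    field_simp
    ring

lemma key2d {φ : ℝ × ℝ → ℝ} (hφ : ConvexOn ℝ (Ioi 0 ×ˢ (univ : Set ℝ)) φ)
    {s₁ y₁ s₂ y₂ g₁ g₂ : ℝ} (hs₁ : 0 < s₁) (hs₂ : 0 < s₂)
    (hsign : s₂ - s₁ ≤ 0 ∨ y₂ - y₁ ≤ 0)
    (hg₁ : HasDerivWithinAt (fun t => φ (t, y₁)) g₁ (Ioi s₁) s₁)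
    (hg₂ : HasDerivWithinAt (fun t => φ (s₁, t)) g₂ (Ioi y₁) y₁) :
    φ (s₁, y₁) + g₁ * (s₂ - s₁) + g₂ * (y₂ - y₁) ≤ φ (s₂, y₂) := by
  have hconv₁ : ConvexOn ℝ (Ioi 0) (fun t => φ (t, y₁)) := by
    refine ⟨convex_Ioi 0, fun p hp q hq a b ha hb hab => ?_⟩
    have h := hφ.2 (x := (p, y₁)) (y := (q, y₁)) ⟨hp, mem_univ _⟩ ⟨hq, mem_univ _⟩ ha hb hab
    have hpt : a • ((p, y₁) : ℝ × ℝ) + b • ((q, y₁) : ℝ × ℝ) = (a • p + b • q, y₁) := by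
      simp [Prod.ext_iff, smul_eq_mul, ← add_mul, hab]
    rw [hpt] at h
    exact h
  have hconv₂ : ConvexOn ℝ (univ : Set ℝ) (fun t => φ (s₁, t)) := by
    refine ⟨convex_univ, fun p _ q _ a b ha hb hab => ?_⟩
    have h := hφ.2 (x := (s₁, p)) (y := (s₁, q)) ⟨hs₁, mem_univ _⟩ ⟨hs₁, mem_univ _⟩ ha hb hab
    have hpt : a • ((s₁, p) : ℝ × ℝ) + b • ((s₁, q) : ℝ × ℝ) = (s₁, a • p + b • q) := by
      simp [Prod.ext_iff, smul_eq_mul, ← add_mul, hab]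
    rw [hpt] at h
    exact h
  have hmem_a : ((s₁, y₁) : ℝ × ℝ) ∈ Ioi 0 ×ˢ (univ : Set ℝ) := ⟨hs₁, mem_univ _⟩
  have hmem_b : ((s₂, y₂) : ℝ × ℝ) ∈ Ioi 0 ×ˢ (univ : Set ℝ) := ⟨hs₂, mem_univ _⟩
  have hIoc : Ioc (0:ℝ) (1/2) ∈ nhdsWithin (0:ℝ) (Ioi 0) :=
    Ioc_mem_nhdsGT_of_mem ⟨le_refl 0, by norm_num⟩
  rcases hsign with hd₁ | hd₂
  · -- case d₁ ≤ 0 : isolate the vertical direction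
    have hev : ∀ᶠ ε in nhdsWithin (0:ℝ) (Ioi 0),
        g₂ * (y₂ - y₁) - (φ (s₁ + ε * (-2 * (s₂ - s₁)), y₁) - φ (s₁, y₁)) / ε / 2
          ≤ φ (s₂, y₂) - φ (s₁, y₁) := by
      filter_upwards [hIoc] with ε hε
      obtain ⟨hε0, hε2⟩ := hε
      have h1 : φ (s₁ + 2*ε*(s₂-s₁), y₁ + 2*ε*(y₂-y₁))
          ≤ (1-2*ε) * φ (s₁, y₁) + (2*ε) * φ (s₂, y₂) := by
        have h := hφ.2 hmem_a hmem_b (show (0:ℝ) ≤ 1-2*ε by linarith)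
          (show (0:ℝ) ≤ 2*ε by linarith) (show (1-2*ε) + 2*ε = 1 by ring)
        have hpt : (1-2*ε) • ((s₁, y₁) : ℝ × ℝ) + (2*ε) • ((s₂, y₂) : ℝ × ℝ)
            = (s₁ + 2*ε*(s₂-s₁), y₁ + 2*ε*(y₂-y₁)) := by
          simp only [Prod.smul_mk, Prod.mk_add_mk, Prod.ext_iff, smul_eq_mul]
          constructor <;> ring
        rw [hpt] at h
        simpa [smul_eq_mul] using h
      have hmemp : ((s₁ + 2*ε*(s₂-s₁), y₁ + 2*ε*(y₂-y₁)) : ℝ × ℝ)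
          ∈ Ioi 0 ×ˢ (univ : Set ℝ) := by
        refine ⟨?_, mem_univ _⟩
        show (0:ℝ) < s₁ + 2*ε*(s₂-s₁)
        nlinarith
      have hmemq : ((s₁ + ε * (-2 * (s₂ - s₁)), y₁) : ℝ × ℝ)
          ∈ Ioi 0 ×ˢ (univ : Set ℝ) := by
        refine ⟨?_, mem_univ _⟩
        show (0:ℝ) < s₁ + ε * (-2 * (s₂ - s₁))
        nlinarith
      have hmid : φ (s₁, y₁ + ε*(y₂-y₁))
          ≤ (1/2) * φ (s₁ + 2*ε*(s₂-s₁), y₁ + 2*ε*(y₂-y₁))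
            + (1/2) * φ (s₁ + ε * (-2 * (s₂ - s₁)), y₁) := by
        have h := hφ.2 hmemp hmemq (show (0:ℝ) ≤ (1/2:ℝ) by norm_num)
          (show (0:ℝ) ≤ (1/2:ℝ) by norm_num) (show (1/2:ℝ) + (1/2:ℝ) = 1 by norm_num)
        have hpt : (1/2 : ℝ) • ((s₁ + 2*ε*(s₂-s₁), y₁ + 2*ε*(y₂-y₁)) : ℝ × ℝ)
            + (1/2 : ℝ) • ((s₁ + ε * (-2 * (s₂ - s₁)), y₁) : ℝ × ℝ)
            = (s₁, y₁ + ε*(y₂-y₁)) := by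
          simp only [Prod.smul_mk, Prod.mk_add_mk, Prod.ext_iff, smul_eq_mul]
          constructor <;> ring
        rw [hpt] at h
        simpa [smul_eq_mul] using h
      have h2 : φ (s₁, y₁) + g₂ * ((y₁ + ε*(y₂-y₁)) - y₁) ≤ φ (s₁, y₁ + ε*(y₂-y₁)) :=
        rightDeriv_subgrad hconv₂ Filter.univ_mem hg₂ (mem_univ _)
      have h4 : g₂*(y₂-y₁) - (φ (s₂, y₂) - φ (s₁, y₁))
          ≤ (φ (s₁ + ε * (-2 * (s₂ - s₁)), y₁) - φ (s₁, y₁)) / (ε*2) := by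
        rw [le_div_iff₀ (by positivity)]
        nlinarith [h1, hmid, h2]
      rw [div_div]
      linarith [h4]
    have htt := ((slope_tendsto_aux hg₁ (c := -2 * (s₂ - s₁)) (by linarith)).div_const
      2).const_sub (g₂ * (y₂ - y₁))
    have hfinal := le_of_tendsto htt hev
    nlinarith [hfinal]
  · -- case d₂ ≤ 0 : isolate the horizontal direction
    have hev : ∀ᶠ ε in nhdsWithin (0:ℝ) (Ioi 0),
        g₁ * (s₂ - s₁) - (φ (s₁, y₁ + ε * (-2 * (y₂ - y₁))) - φ (s₁, y₁)) / ε / 2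
          ≤ φ (s₂, y₂) - φ (s₁, y₁) := by
      filter_upwards [hIoc] with ε hε
      obtain ⟨hε0, hε2⟩ := hε
      have h1 : φ (s₁ + 2*ε*(s₂-s₁), y₁ + 2*ε*(y₂-y₁))
          ≤ (1-2*ε) * φ (s₁, y₁) + (2*ε) * φ (s₂, y₂) := by
        have h := hφ.2 hmem_a hmem_b (show (0:ℝ) ≤ 1-2*ε by linarith)
          (show (0:ℝ) ≤ 2*ε by linarith) (show (1-2*ε) + 2*ε = 1 by ring)
        have hpt : (1-2*ε) • ((s₁, y₁) : ℝ × ℝ) + (2*ε) • ((s₂, y₂) : ℝ × ℝ)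
            = (s₁ + 2*ε*(s₂-s₁), y₁ + 2*ε*(y₂-y₁)) := by
          simp only [Prod.smul_mk, Prod.mk_add_mk, Prod.ext_iff, smul_eq_mul]
          constructor <;> ring
        rw [hpt] at h
        simpa [smul_eq_mul] using h
      have hmemp : ((s₁ + 2*ε*(s₂-s₁), y₁ + 2*ε*(y₂-y₁)) : ℝ × ℝ)
          ∈ Ioi 0 ×ˢ (univ : Set ℝ) := by
        refine ⟨?_, mem_univ _⟩
        show (0:ℝ) < s₁ + 2*ε*(s₂-s₁)
        nlinarith
      have hmemq : ((s₁, y₁ + ε * (-2 * (y₂ - y₁))) : ℝ × ℝ)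
          ∈ Ioi 0 ×ˢ (univ : Set ℝ) := ⟨hs₁, mem_univ _⟩
      have hmid : φ (s₁ + ε*(s₂-s₁), y₁)
          ≤ (1/2) * φ (s₁ + 2*ε*(s₂-s₁), y₁ + 2*ε*(y₂-y₁))
            + (1/2) * φ (s₁, y₁ + ε * (-2 * (y₂ - y₁))) := by
        have h := hφ.2 hmemp hmemq (show (0:ℝ) ≤ (1/2:ℝ) by norm_num)
          (show (0:ℝ) ≤ (1/2:ℝ) by norm_num) (show (1/2:ℝ) + (1/2:ℝ) = 1 by norm_num)
        have hpt : (1/2 : ℝ) • ((s₁ + 2*ε*(s₂-s₁), y₁ + 2*ε*(y₂-y₁)) : ℝ × ℝ)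
            + (1/2 : ℝ) • ((s₁, y₁ + ε * (-2 * (y₂ - y₁))) : ℝ × ℝ)
            = (s₁ + ε*(s₂-s₁), y₁) := by
          simp only [Prod.smul_mk, Prod.mk_add_mk, Prod.ext_iff, smul_eq_mul]
          constructor <;> ring
        rw [hpt] at h
        simpa [smul_eq_mul] using h
      have h2 : φ (s₁, y₁) + g₁ * ((s₁ + ε*(s₂-s₁)) - s₁) ≤ φ (s₁ + ε*(s₂-s₁), y₁) := by
        refine rightDeriv_subgrad hconv₁ (Ioi_mem_nhds hs₁) hg₁ ?_
        show (0:ℝ) < s₁ + ε*(s₂-s₁)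
        nlinarith
      have h4 : g₁*(s₂-s₁) - (φ (s₂, y₂) - φ (s₁, y₁))
          ≤ (φ (s₁, y₁ + ε * (-2 * (y₂ - y₁))) - φ (s₁, y₁)) / (ε*2) := by
        rw [le_div_iff₀ (by positivity)]
        nlinarith [h1, hmid, h2]
      rw [div_div]
      linarith [h4]
    have htt := ((slope_tendsto_aux hg₂ (c := -2 * (y₂ - y₁)) (by linarith)).div_const
      2).const_sub (g₁ * (s₂ - s₁))
    have hfinal := le_of_tendsto htt hev
    nlinarith [hfinal]

end KeyAux


/-- Superreplication property of functionally generated portfolios: for a convex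
`φ` on `(0,∞) × ℝ`, the portfolio `u₁ = φ*_super`, `u₂ = φ(·, L(·))`,
`Δ^S = -∂₁,ᵣφ`, `Δ^L = -∂₂,ᵣφ` (right partial derivatives) satisfies the
superreplication constraint; `u₁` is the pointwise supremum, valued in
`ℝ ∪ {+∞}` (modelled in `EReal`). -/
theorem functionally_generated_superrep (τ : ℝ) (hτ : 0 < τ)
    (φ : ℝ × ℝ → ℝ) (hφ : ConvexOn ℝ (Set.Ioi 0 ×ˢ (Set.univ : Set ℝ)) φ) :
    ∀ s₁ s₂ v : ℝ, 0 < s₁ → 0 < s₂ → 0 ≤ v →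
      (v : EReal) ≤
        (⨆ w : Set.Ici (0 : ℝ), (((w : ℝ) - φ (s₁, Lf τ s₁ + (w : ℝ) ^ 2) : ℝ) : EReal))
        + ((φ (s₂, Lf τ s₂)
            + (-(derivWithin (fun t => φ (t, Lf τ s₁ + v ^ 2)) (Set.Ioi s₁) s₁))
                * (s₂ - s₁)
            + (-(derivWithin (fun t => φ (s₁, t)) (Set.Ioi (Lf τ s₁ + v ^ 2))
                  (Lf τ s₁ + v ^ 2)))
                * (Lf τ (s₂ / s₁) - v ^ 2) : ℝ) : EReal) := by
  intro s₁ s₂ v hs₁ hs₂ hv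
  set y₁ : ℝ := Lf τ s₁ + v ^ 2 with hy₁
  set y₂ : ℝ := Lf τ s₂ with hy₂
  -- convexity of the one-dimensional restrictions
  have hconv₁ : ConvexOn ℝ (Ioi 0) (fun t => φ (t, y₁)) := by
    refine ⟨convex_Ioi 0, fun p hp q hq a b ha hb hab => ?_⟩
    have h := hφ.2 (x := (p, y₁)) (y := (q, y₁)) ⟨hp, mem_univ _⟩ ⟨hq, mem_univ _⟩ ha hb hab
    have hpt : a • ((p, y₁) : ℝ × ℝ) + b • ((q, y₁) : ℝ × ℝ) = (a • p + b • q, y₁) := by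
      simp [Prod.ext_iff, smul_eq_mul, ← add_mul, hab]
    rw [hpt] at h
    exact h
  have hconv₂ : ConvexOn ℝ (univ : Set ℝ) (fun t => φ (s₁, t)) := by
    refine ⟨convex_univ, fun p _ q _ a b ha hb hab => ?_⟩
    have h := hφ.2 (x := (s₁, p)) (y := (s₁, q)) ⟨hs₁, mem_univ _⟩ ⟨hs₁, mem_univ _⟩ ha hb hab
    have hpt : a • ((s₁, p) : ℝ × ℝ) + b • ((s₁, q) : ℝ × ℝ) = (s₁, a • p + b • q) := by
      simp [Prod.ext_iff, smul_eq_mul, ← add_mul, hab]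
    rw [hpt] at h
    exact h
  obtain ⟨g₁, hg₁⟩ := exists_rightDeriv hconv₁ (Ioi_mem_nhds hs₁)
  obtain ⟨g₂, hg₂⟩ := exists_rightDeriv hconv₂ (Filter.univ_mem (f := nhds y₁))
  have hd₁ : derivWithin (fun t => φ (t, y₁)) (Set.Ioi s₁) s₁ = g₁ :=
    hg₁.derivWithin (uniqueDiffWithinAt_Ioi s₁)
  have hd₂ : derivWithin (fun t => φ (s₁, t)) (Set.Ioi y₁) y₁ = g₂ :=
    hg₂.derivWithin (uniqueDiffWithinAt_Ioi y₁)
  have hLdiv : Lf τ (s₂ / s₁) - v ^ 2 = y₂ - y₁ := by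
    simp only [hy₁, hy₂, Lf, Real.log_div hs₂.ne' hs₁.ne']
    ring
  have hsign : s₂ - s₁ ≤ 0 ∨ y₂ - y₁ ≤ 0 := by
    rcases le_total s₂ s₁ with h | h
    · exact Or.inl (by linarith)
    · refine Or.inr ?_
      have hlog : Real.log s₁ ≤ Real.log s₂ := Real.log_le_log hs₁ h
      have h2τ : 0 < 2 / τ := by positivity
      simp only [hy₁, hy₂, Lf]
      nlinarith [sq_nonneg v]
  have hkey : φ (s₁, y₁) + g₁ * (s₂ - s₁) + g₂ * (y₂ - y₁) ≤ φ (s₂, y₂) :=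
    key2d hφ hs₁ hs₂ hsign hg₁ hg₂
  have hC : φ (s₁, y₁) ≤ φ (s₂, y₂)
      + (-(derivWithin (fun t => φ (t, y₁)) (Set.Ioi s₁) s₁)) * (s₂ - s₁)
      + (-(derivWithin (fun t => φ (s₁, t)) (Set.Ioi y₁) y₁)) * (Lf τ (s₂ / s₁) - v ^ 2) := by
    rw [hd₁, hd₂, hLdiv]
    linarith
  have hsup : (((v - φ (s₁, y₁)) : ℝ) : EReal)
      ≤ ⨆ w : Set.Ici (0 : ℝ), (((w : ℝ) - φ (s₁, Lf τ s₁ + (w : ℝ) ^ 2) : ℝ) : EReal) := by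
    have := le_iSup (fun w : Set.Ici (0 : ℝ) =>
      (((w : ℝ) - φ (s₁, Lf τ s₁ + (w : ℝ) ^ 2) : ℝ) : EReal)) ⟨v, hv⟩
    simpa [hy₁] using this
  calc (v : EReal) = (((v - φ (s₁, y₁)) : ℝ) : EReal) + ((φ (s₁, y₁) : ℝ) : EReal) := by
        rw [← EReal.coe_add]
        norm_num
    _ ≤ _ := add_le_add hsup (EReal.coe_le_coe_iff.2 hC)
end
end
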